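/- arXiv:2504.03069 — 5 statements merged into one kernel-verified Lean document; each statement's English description precedes it below -/
import Mathlib

section
/- Let f: ℝ^n × ℝ^m → ℝ be C² and let z* = (x*, y*) be a local saddle point of f. Then for every τ > 0, every complex eigenvalue κ of the real matrix Λ_τ H(z*) satisfies Re(κ) ≤ 0. -/
open Matrix MeasureTheory

noncomputable section

abbrev Spc (n m : ℕ) : Type := EuclideanSpace ℝ (Fin n ⊕ Fin m)

variable {n m : ℕ}

def ofVec (v : (Fin n ⊕ Fin m) → ℝ) : Spc n m := (WithLp.equiv 2 _).symm v

def mulVecE (A : Matrix (Fin n ⊕ Fin m) (Fin n ⊕ Fin m) ℝ) (v : Spc n m) : Spc n m :=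
  ofVec (A.mulVec v)

def Fvec (f : Spc n m → ℝ) (z : Spc n m) : Spc n m :=
  ofVec (Sum.elim (fun i => gradient f z (Sum.inl i)) (fun j => - gradient f z (Sum.inr j)))

def Lam (n m : ℕ) (τ : ℝ) : Matrix (Fin n ⊕ Fin m) (Fin n ⊕ Fin m) ℝ :=
  Matrix.diagonal (Sum.elim (fun _ => 1/τ) (fun _ => 1))

def hess (f : Spc n m → ℝ) (z : Spc n m) : Matrix (Fin n ⊕ Fin m) (Fin n ⊕ Fin m) ℝ :=
  Matrix.of fun i j => gradient (fun w => gradient f w j) z i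

def Hmat (f : Spc n m → ℝ) (z : Spc n m) : Matrix (Fin n ⊕ Fin m) (Fin n ⊕ Fin m) ℝ :=
  Matrix.diagonal (Sum.elim (fun _ => (-1:ℝ)) (fun _ => 1)) * hess f z

def geg (f : Spc n m → ℝ) (η τ γ : ℝ) (z : Spc n m) : Spc n m :=
  z - (γ * η) • mulVecE (Lam n m τ) (Fvec f (z - η • mulVecE (Lam n m τ) (Fvec f z)))

def Jmat (f : Spc n m → ℝ) (η τ γ : ℝ) (z : Spc n m) :
    Matrix (Fin n ⊕ Fin m) (Fin n ⊕ Fin m) ℝ :=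
  1 + (γ * η) • ((Lam n m τ * Hmat f (z - η • mulVecE (Lam n m τ) (Fvec f z))) *
      (1 + η • (Lam n m τ * Hmat f z)))

def withX (z u : Spc n m) : Spc n m :=
  ofVec (Sum.elim (fun i => z (Sum.inl i)) (fun j => u (Sum.inr j)))

def IsLocalSaddle (f : Spc n m → ℝ) (z : Spc n m) : Prop :=
  ∃ U ∈ nhds z, ∀ u ∈ U, f (withX z u) ≤ f z ∧ f z ≤ f (withX u z)

def cSpec (A : Matrix (Fin n ⊕ Fin m) (Fin n ⊕ Fin m) ℝ) : Set ℂ :=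
  spectrum ℂ (A.map (algebraMap ℝ ℂ))


def ee (i : Fin n ⊕ Fin m) : Spc n m := EuclideanSpace.single i (1:ℝ)

lemma grad_coord (h : Spc n m → ℝ) (z : Spc n m) (j : Fin n ⊕ Fin m) :
    gradient h z j = fderiv ℝ h z (ee j) := by
  have h1 : @inner ℝ _ _ (gradient h z) (ee j) = fderiv ℝ h z (ee j) := by
    rw [gradient]; exact InnerProductSpace.toDual_symm_apply
  rw [← h1, ee, EuclideanSpace.inner_single_right]
  simp

lemma diff_fderiv {f : Spc n m → ℝ} (hf : ContDiff ℝ 2 f) : Differentiable ℝ (fderiv ℝ f) :=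
  (hf.fderiv_right (m := 1) (by norm_num)).differentiable (by norm_num)

lemma hess_eq {f : Spc n m → ℝ} (hf : ContDiff ℝ 2 f) (z : Spc n m) (i j : Fin n ⊕ Fin m) :
    hess f z i j = fderiv ℝ (fderiv ℝ f) z (ee i) (ee j) := by
  have hfun : (fun w : Spc n m => gradient f w j) = fun w => fderiv ℝ f w (ee j) :=
    funext fun w => grad_coord f w j
  have h1 : hess f z i j = fderiv ℝ (fun w => fderiv ℝ f w (ee j)) z (ee i) := by
    show gradient (fun w => gradient f w j) z i = _
    rw [grad_coord, hfun]
  rw [h1, fderiv_clm_apply (diff_fderiv hf z) (differentiableAt_const _)]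
  simp

lemma hess_symm {f : Spc n m → ℝ} (hf : ContDiff ℝ 2 f) (z : Spc n m) (i j : Fin n ⊕ Fin m) :
    hess f z i j = hess f z j i := by
  rw [hess_eq hf, hess_eq hf]
  exact hf.contDiffAt.isSymmSndFDerivAt (by simp) (ee i) (ee j)

lemma dir2 {f : Spc n m → ℝ} (hf : ContDiff ℝ 2 f) (z d : Spc n m) :
    ∃ φ' : ℝ → ℝ,
      (∀ t, HasDerivAt (fun s => f (z + s • d)) (φ' t) t) ∧
      HasDerivAt φ' (fderiv ℝ (fderiv ℝ f) z d d) 0 := by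
  have hg : ∀ t : ℝ, HasDerivAt (fun s : ℝ => z + s • d) d t := by
    intro t
    simpa using ((hasDerivAt_id t).smul_const d).const_add z
  refine ⟨fun t => fderiv ℝ f (z + t • d) d, fun t => ?_, ?_⟩
  · exact (((hf.differentiable (by norm_num)) (z + t • d)).hasFDerivAt).comp_hasDerivAt t (hg t)
  · have h2 : HasFDerivAt (fderiv ℝ f) (fderiv ℝ (fderiv ℝ f) z) (z + (0:ℝ) • d) := by
      simpa using (diff_fderiv hf z).hasFDerivAt
    have h3 : HasDerivAt (fun t : ℝ => fderiv ℝ f (z + t • d))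
        (fderiv ℝ (fderiv ℝ f) z d) 0 := h2.comp_hasDerivAt 0 (hg 0)
    simpa using h3.clm_apply (hasDerivAt_const 0 d)

lemma min1d {h h' : ℝ → ℝ} {c : ℝ} (hd : ∀ t, HasDerivAt h (h' t) t)
    (hd2 : HasDerivAt h' c 0) (hmin : IsLocalMin h 0) : 0 ≤ c := by
  by_contra hc
  push_neg at hc
  have h'0 : h' 0 = 0 := hmin.hasDerivAt_eq_zero (hd 0)
  have hs : Filter.Tendsto (fun t => h' t / t) (nhdsWithin 0 {(0:ℝ)}ᶜ) (nhds c) := by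
    have h1 := hasDerivAt_iff_tendsto_slope.mp hd2
    have : (slope h' 0) = fun t => h' t / t := by
      funext t; simp [slope_def_field, h'0]
    rwa [this] at h1
  have hs2 : Filter.Tendsto (fun t => h' t / t) (nhdsWithin 0 (Set.Ioi 0)) (nhds c) :=
    hs.mono_left (nhdsWithin_mono 0 (fun t ht => Set.mem_compl fun h0 => by
      simp [Set.mem_singleton_iff.mp h0] at ht))
  have hev1 : ∀ᶠ t in nhdsWithin 0 (Set.Ioi 0), h' t / t < 0 :=
    hs2.eventually_lt_const hc
  have hev2 : ∀ᶠ t in nhdsWithin 0 (Set.Ioi 0), h' t < 0 := by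
    filter_upwards [hev1, self_mem_nhdsWithin] with t ht1 ht2
    have ht : (0:ℝ) < t := ht2
    have := mul_neg_of_neg_of_pos ht1 ht
    rwa [div_mul_cancel₀ _ (ne_of_gt ht)] at this
  obtain ⟨δ, hδ, hsub⟩ := mem_nhdsGT_iff_exists_Ioo_subset.mp hev2
  obtain ⟨ε, hε, hball⟩ := Metric.eventually_nhds_iff.mp hmin
  set t0 : ℝ := min (δ/2) (ε/2) with ht0def
  have hδ' : (0:ℝ) < δ := hδ
  have ht0pos : 0 < t0 := lt_min (by linarith) (by linarith)
  have ht0δ : t0 < δ := lt_of_le_of_lt (min_le_left _ _) (by linarith)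
  have hanti : StrictAntiOn h (Set.Icc 0 t0) := by
    apply strictAntiOn_of_deriv_neg (convex_Icc _ _)
    · exact fun x _ => ((hd x).continuousAt).continuousWithinAt
    · intro x hx
      rw [interior_Icc] at hx
      rw [(hd x).deriv]
      exact hsub ⟨hx.1, lt_trans hx.2 ht0δ⟩
  have h1 : h t0 < h 0 := hanti (Set.left_mem_Icc.mpr ht0pos.le)
    (Set.right_mem_Icc.mpr ht0pos.le) ht0pos
  have h2 : h 0 ≤ h t0 := hball (by
    simp [Real.dist_eq, abs_of_pos ht0pos]
    exact lt_of_le_of_lt (min_le_right _ _) (by linarith))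
  linarith

lemma max1d {h h' : ℝ → ℝ} {c : ℝ} (hd : ∀ t, HasDerivAt h (h' t) t)
    (hd2 : HasDerivAt h' c 0) (hmax : IsLocalMax h 0) : c ≤ 0 := by
  have := min1d (h := fun t => -h t) (h' := fun t => -h' t) (c := -c)
    (fun t => (hd t).neg) hd2.neg hmax.neg
  linarith

lemma spc_add_smul_apply (z d : Spc n m) (t : ℝ) (i : Fin n ⊕ Fin m) :
    (z + t • d) i = z i + t * d i := rfl

lemma ofVec_apply (v : (Fin n ⊕ Fin m) → ℝ) (i : Fin n ⊕ Fin m) : ofVec v i = v i := rfl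

lemma localmin_x {f : Spc n m → ℝ} {zs : Spc n m} (hzs : IsLocalSaddle f zs) (p : Fin n → ℝ) :
    IsLocalMin (fun t : ℝ => f (zs + t • ofVec (Sum.elim p 0))) 0 := by
  obtain ⟨U, hU, hsad⟩ := hzs
  set d : Spc n m := ofVec (Sum.elim p 0) with hd
  have hcont : Continuous (fun t : ℝ => zs + t • d) := by
    exact continuous_const.add (continuous_id.smul continuous_const)
  have hev : ∀ᶠ t in nhds (0:ℝ), zs + t • d ∈ U := by
    have := hcont.continuousAt (x := (0:ℝ))
    apply this.preimage_mem_nhds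
    simpa using hU
  have h0 : zs + (0:ℝ) • d = zs := by simp
  unfold IsLocalMin IsMinFilter
  filter_upwards [hev] with t ht
  have h2 := (hsad _ ht).2
  have heq : withX (zs + t • d) zs = zs + t • d := by
    ext i
    cases i with
    | inl a => rfl
    | inr b =>
      show zs (Sum.inr b) = (zs + t • d) (Sum.inr b)
      rw [spc_add_smul_apply, hd, ofVec_apply]
      simp
  rw [heq] at h2
  simpa [h0] using h2

lemma localmax_y {f : Spc n m → ℝ} {zs : Spc n m} (hzs : IsLocalSaddle f zs) (q : Fin m → ℝ) :
    IsLocalMax (fun t : ℝ => f (zs + t • ofVec (Sum.elim 0 q))) 0 := by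
  obtain ⟨U, hU, hsad⟩ := hzs
  set d : Spc n m := ofVec (Sum.elim 0 q) with hd
  have hcont : Continuous (fun t : ℝ => zs + t • d) := by
    exact continuous_const.add (continuous_id.smul continuous_const)
  have hev : ∀ᶠ t in nhds (0:ℝ), zs + t • d ∈ U := by
    have := hcont.continuousAt (x := (0:ℝ))
    apply this.preimage_mem_nhds
    simpa using hU
  have h0 : zs + (0:ℝ) • d = zs := by simp
  unfold IsLocalMax IsMaxFilter
  filter_upwards [hev] with t ht
  have h2 := (hsad _ ht).1
  have heq : withX zs (zs + t • d) = zs + t • d := by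
    ext i
    cases i with
    | inl a =>
      show zs (Sum.inl a) = (zs + t • d) (Sum.inl a)
      rw [spc_add_smul_apply, hd, ofVec_apply]
      simp
    | inr b => rfl
  rw [heq] at h2
  simpa [h0] using h2

lemma ofVec_eq_sum (w : (Fin n ⊕ Fin m) → ℝ) :
    ofVec w = ∑ i, w i • ee i := by
  ext j
  have : (∑ i, w i • ee i) j = ∑ i, w i * ee i j := by
    rw [show ((∑ i, w i • ee i) j) = (∑ i, w i • ee i : (Fin n ⊕ Fin m) → ℝ) j by
      rw [WithLp.ofLp_sum]; rfl]
    rw [Finset.sum_apply]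
    rfl
  rw [this, ofVec_apply]
  simp [ee, EuclideanSpace.single_apply]

lemma bilin (B : Spc n m →L[ℝ] Spc n m →L[ℝ] ℝ) (w u : (Fin n ⊕ Fin m) → ℝ) :
    B (ofVec w) (ofVec u) = ∑ i, ∑ j, w i * u j * B (ee i) (ee j) := by
  rw [ofVec_eq_sum w, ofVec_eq_sum u]
  simp only [map_sum, _root_.map_smul, ContinuousLinearMap.sum_apply,
    ContinuousLinearMap.smul_apply, smul_eq_mul, ContinuousLinearMap.coe_sum',
    Finset.sum_apply]
  rw [Finset.sum_comm]
  refine Finset.sum_congr rfl fun i _ => ?_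
  rw [Finset.mul_sum]
  exact Finset.sum_congr rfl fun j _ => by ring

lemma quad_nonpos {f : Spc n m → ℝ} {zs : Spc n m} (hf : ContDiff ℝ 2 f)
    (hzs : IsLocalSaddle f zs) (w : (Fin n ⊕ Fin m) → ℝ) :
    ∑ i, ∑ j, Sum.elim (fun _ => (-1:ℝ)) (fun _ => 1) i * hess f zs i j * w i * w j ≤ 0 := by
  set B := fderiv ℝ (fderiv ℝ f) zs with hB
  have hsym : ∀ i j, B (ee i) (ee j) = B (ee j) (ee i) := fun i j => by
    rw [← hess_eq hf, ← hess_eq hf, hess_symm hf]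
  have hxx : 0 ≤ B (ofVec (Sum.elim (fun a => w (Sum.inl a)) 0))
      (ofVec (Sum.elim (fun a => w (Sum.inl a)) 0)) := by
    obtain ⟨φ', h1, h2⟩ := dir2 hf zs _
    exact min1d h1 h2 (localmin_x hzs _)
  have hyy : B (ofVec (Sum.elim 0 (fun b => w (Sum.inr b))))
      (ofVec (Sum.elim 0 (fun b => w (Sum.inr b)))) ≤ 0 := by
    obtain ⟨φ', h1, h2⟩ := dir2 hf zs _
    exact max1d h1 h2 (localmax_y hzs _)
  rw [bilin] at hxx hyy
  simp only [hess_eq hf, ← hB]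
  simp only [Fintype.sum_sum_type, Sum.elim_inl, Sum.elim_inr, Pi.zero_apply,
    zero_mul, mul_zero, Finset.sum_const_zero, add_zero, zero_add] at hxx hyy ⊢
  rw [Finset.sum_add_distrib, Finset.sum_add_distrib]
  have reXX : ∑ x : Fin n, ∑ x1 : Fin n,
        -1 * (B (ee (Sum.inl x))) (ee (Sum.inl x1)) * w (Sum.inl x) * w (Sum.inl x1)
      = -(∑ x : Fin n, ∑ x1 : Fin n,
        w (Sum.inl x) * w (Sum.inl x1) * (B (ee (Sum.inl x))) (ee (Sum.inl x1))) := by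
    rw [← Finset.sum_neg_distrib]
    refine Finset.sum_congr rfl fun a _ => ?_
    rw [← Finset.sum_neg_distrib]
    exact Finset.sum_congr rfl fun b _ => by ring
  have reYY : ∑ x : Fin m, ∑ x1 : Fin m,
        1 * (B (ee (Sum.inr x))) (ee (Sum.inr x1)) * w (Sum.inr x) * w (Sum.inr x1)
      = ∑ x : Fin m, ∑ x1 : Fin m,
        w (Sum.inr x) * w (Sum.inr x1) * (B (ee (Sum.inr x))) (ee (Sum.inr x1)) :=
    Finset.sum_congr rfl fun a _ => Finset.sum_congr rfl fun b _ => by ring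
  have reC : ∑ x : Fin m, ∑ x1 : Fin n,
        1 * (B (ee (Sum.inr x))) (ee (Sum.inl x1)) * w (Sum.inr x) * w (Sum.inl x1)
      = -(∑ x : Fin n, ∑ x1 : Fin m,
        -1 * (B (ee (Sum.inl x))) (ee (Sum.inr x1)) * w (Sum.inl x) * w (Sum.inr x1)) := by
    rw [Finset.sum_comm, ← Finset.sum_neg_distrib]
    refine Finset.sum_congr rfl fun a _ => ?_
    rw [← Finset.sum_neg_distrib]
    refine Finset.sum_congr rfl fun b _ => ?_
    rw [hsym]; ring
  rw [reXX, reYY, reC]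
  linarith


/-- at a local saddle point, every complex eigenvalue of Λ_τ H(z*)
has non-positive real part. -/
theorem stmt1 (n m : ℕ) (f : Spc n m → ℝ) (hf : ContDiff ℝ 2 f)
    (zs : Spc n m) (hzs : IsLocalSaddle f zs) (τ : ℝ) (hτ : 0 < τ)
    (κ : ℂ) (hκ : κ ∈ cSpec (Lam n m τ * Hmat f zs)) :
    κ.re ≤ 0 := by
  classical
  set M : Matrix (Fin n ⊕ Fin m) (Fin n ⊕ Fin m) ℝ := Lam n m τ * Hmat f zs with hM
  set Mc : Matrix (Fin n ⊕ Fin m) (Fin n ⊕ Fin m) ℂ := M.map (algebraMap ℝ ℂ) with hMc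
  -- eigenvector extraction
  have h1 : ¬ IsUnit (algebraMap ℂ (Matrix (Fin n ⊕ Fin m) (Fin n ⊕ Fin m) ℂ) κ - Mc) :=
    spectrum.mem_iff.mp hκ
  have h2 : (algebraMap ℂ (Matrix (Fin n ⊕ Fin m) (Fin n ⊕ Fin m) ℂ) κ - Mc).det = 0 := by
    by_contra hdet
    exact h1 ((Matrix.isUnit_iff_isUnit_det _).mpr (isUnit_iff_ne_zero.mpr hdet))
  obtain ⟨v, hv0, hv⟩ := (Matrix.exists_mulVec_eq_zero_iff).mpr h2
  have heig : ∀ i, ∑ j, Mc i j * v j = κ * v i := by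
    intro i
    have h3 := congrFun hv i
    simp only [Matrix.sub_mulVec, Pi.sub_apply, Pi.zero_apply, sub_eq_zero,
      Matrix.algebraMap_eq_diagonal, Pi.algebraMap_apply, Algebra.algebraMap_self_apply,
      Matrix.mulVec_diagonal] at h3
    rw [show (Mc.mulVec v) i = ∑ j, Mc i j * v j from rfl] at h3
    rw [h3]
  set dv : (Fin n ⊕ Fin m) → ℝ := Sum.elim (fun _ => τ) (fun _ => 1) with hdv
  have hdvpos : ∀ i, 0 < dv i := by
    intro i; cases i with
    | inl a => simpa [hdv] using hτ
    | inr b => simp [hdv]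
  have hkey : ∀ i j, dv i * M i j = Hmat f zs i j := by
    intro i j
    rw [hM, Lam, Matrix.diagonal_mul]
    cases i with
    | inl a =>
      simp only [hdv, Sum.elim_inl]
      field_simp
    | inr b => simp [hdv]
  set S : ℝ := ∑ i, dv i * Complex.normSq (v i) with hS
  have hSpos : 0 < S := by
    obtain ⟨i0, hi0⟩ := Function.ne_iff.mp hv0
    refine Finset.sum_pos' (fun i _ => ?_) ⟨i0, Finset.mem_univ i0, ?_⟩
    · exact mul_nonneg (hdvpos i).le (Complex.normSq_nonneg _)
    · exact mul_pos (hdvpos i0) (Complex.normSq_pos.mpr hi0)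
  have hmain : κ * (S : ℂ) =
      ∑ i, ∑ j, ((Hmat f zs i j : ℝ) : ℂ) * ((starRingEnd ℂ) (v i) * v j) := by
    calc κ * (S : ℂ) = ∑ i, ((dv i : ℝ) : ℂ) * (starRingEnd ℂ) (v i) * (κ * v i) := by
          rw [hS]
          push_cast
          rw [Finset.mul_sum]
          refine Finset.sum_congr rfl fun i _ => ?_
          rw [show ((Complex.normSq (v i) : ℝ) : ℂ) = (starRingEnd ℂ) (v i) * v i by
            rw [Complex.normSq_eq_conj_mul_self]]
          ring
      _ = ∑ i, ((dv i : ℝ) : ℂ) * (starRingEnd ℂ) (v i) * (∑ j, Mc i j * v j) := by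
          refine Finset.sum_congr rfl fun i _ => ?_
          rw [heig i]
      _ = ∑ i, ∑ j, ((dv i : ℝ) : ℂ) * Mc i j * ((starRingEnd ℂ) (v i) * v j) := by
          refine Finset.sum_congr rfl fun i _ => ?_
          rw [Finset.mul_sum]
          exact Finset.sum_congr rfl fun j _ => by ring
      _ = ∑ i, ∑ j, ((Hmat f zs i j : ℝ) : ℂ) * ((starRingEnd ℂ) (v i) * v j) := by
          refine Finset.sum_congr rfl fun i _ => Finset.sum_congr rfl fun j _ => ?_
          congr 1
          rw [hMc, show M.map (algebraMap ℝ ℂ) i j = ((M i j : ℝ) : ℂ) from rfl,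
            ← hkey i j]
          push_cast
          ring
  have hQ : ∀ w : (Fin n ⊕ Fin m) → ℝ, ∑ i, ∑ j, Hmat f zs i j * (w i * w j) ≤ 0 := by
    intro w
    have hq := quad_nonpos hf hzs w
    calc ∑ i, ∑ j, Hmat f zs i j * (w i * w j)
        = ∑ i, ∑ j, Sum.elim (fun _ => (-1:ℝ)) (fun _ => 1) i * hess f zs i j * w i * w j := by
          refine Finset.sum_congr rfl fun i _ => Finset.sum_congr rfl fun j _ => ?_
          rw [Hmat, Matrix.diagonal_mul]; ring
      _ ≤ 0 := hq
  have hre := congrArg Complex.re hmain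
  have hlhs : (κ * (S:ℂ)).re = κ.re * S := by simp [Complex.mul_re]
  have hrhs : (∑ i, ∑ j, ((Hmat f zs i j : ℝ):ℂ) * ((starRingEnd ℂ) (v i) * v j)).re
      = ∑ i, ∑ j, Hmat f zs i j * ((v i).re * (v j).re + (v i).im * (v j).im) := by
    rw [Complex.re_sum]
    refine Finset.sum_congr rfl fun i _ => ?_
    rw [Complex.re_sum]
    refine Finset.sum_congr rfl fun j _ => ?_
    simp [Complex.mul_re]
  rw [hlhs, hrhs] at hre
  have hsplit : ∑ i, ∑ j, Hmat f zs i j * ((v i).re * (v j).re + (v i).im * (v j).im)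
      = (∑ i, ∑ j, Hmat f zs i j * ((v i).re * (v j).re))
        + ∑ i, ∑ j, Hmat f zs i j * ((v i).im * (v j).im) := by
    rw [← Finset.sum_add_distrib]
    refine Finset.sum_congr rfl fun i _ => ?_
    rw [← Finset.sum_add_distrib]
    exact Finset.sum_congr rfl fun j _ => by ring
  rw [hsplit] at hre
  have hQa := hQ (fun i => (v i).re)
  have hQb := hQ (fun i => (v i).im)
  by_contra h
  push_neg at h
  nlinarith [mul_pos h hSpos]
end
end

section
/- Let f: ℝ^n × ℝ^m → ℝ be C³ with ∇f globally Lipschitz with constant L > 0, and suppose the Hessian ∇²f is invertible at every local saddle point of f. Let τ > 0 and η ∈ (0, min{1, τ}/L). Then for every γ ∈ (0, 1], every local saddle point z* of f is a fixed point of the GEG map w at which every eigenvalue of the Jacobian J(z*) has modulus strictly less than 1 (hence z* is a locally asymptotically stable equilibrium of the GEG dynamics). -/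
open Matrix MeasureTheory

noncomputable section

variable {n m : ℕ}

def AsympStable (w : Spc n m → Spc n m) (ze : Spc n m) : Prop :=
  (∀ ε > 0, ∃ δ > 0, ∀ z₀ : Spc n m, dist z₀ ze ≤ δ → ∀ k : ℕ, dist (w^[k] z₀) ze ≤ ε) ∧
  ∃ δ > 0, ∀ z₀ : Spc n m, dist z₀ ze ≤ δ →
    Filter.Tendsto (fun k => w^[k] z₀) Filter.atTop (nhds ze)

-- ####### AUX START
namespace Stmt5Aux

open scoped RealInnerProductSpace

variable {n m : ℕ}

/-- basis vector -/
noncomputable def ee (k : Fin n ⊕ Fin m) : Spc n m := EuclideanSpace.single k 1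

lemma ofVec_apply (v : (Fin n ⊕ Fin m) → ℝ) (k) : ofVec (n := n) (m := m) v k = v k := rfl

lemma spc_ext {x y : Spc n m} (h : ∀ k, x k = y k) : x = y := PiLp.ext h

lemma inner_gradient (f : Spc n m → ℝ) (z v : Spc n m) :
    ⟪gradient f z, v⟫ = fderiv ℝ f z v := by
  rw [gradient, ← InnerProductSpace.toDual_apply_apply, LinearIsometryEquiv.apply_symm_apply]

lemma gradient_apply_single (f : Spc n m → ℝ) (z : Spc n m) (k) :
    gradient f z k = fderiv ℝ f z (ee k) := by
  rw [← inner_gradient, ee, EuclideanSpace.inner_single_right]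
  simp


open Filter

lemma second_deriv_nonneg_of_isLocalMin {g g' : ℝ → ℝ} {c : ℝ}
    (hder : ∀ t, HasDerivAt g (g' t) t) (hder2 : HasDerivAt g' c 0)
    (hmin : IsLocalMin g 0) : 0 ≤ c := by
  by_contra hc
  push_neg at hc
  have h0 : g' 0 = 0 := by
    have := hmin.deriv_eq_zero
    rwa [(hder 0).deriv] at this
  have hs : Tendsto (slope g' 0) (nhdsWithin 0 {0}ᶜ) (nhds c) :=
    hasDerivAt_iff_tendsto_slope.mp hder2
  have h1 : Tendsto (slope g' 0) (nhdsWithin 0 (Set.Ioi 0)) (nhds c) :=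
    hs.mono_left (nhdsWithin_mono _ (by intro x hx; simpa using ne_of_gt hx))
  have h2 : ∀ᶠ t in nhdsWithin 0 (Set.Ioi 0), slope g' 0 t < 0 :=
    h1.eventually_lt_const hc
  have hneg : ∀ᶠ t in nhds (0:ℝ), t ∈ Set.Ioi (0:ℝ) → g' t < 0 := by
    have := eventually_nhdsWithin_iff.mp h2
    refine this.mono fun t ht htpos => ?_
    have := ht htpos
    rw [slope_def_field, div_neg_iff] at this
    rcases this with ⟨_, h⟩ | ⟨h, _⟩
    · simp at htpos; linarith [htpos]
    · simpa [h0] using h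
  rcases Metric.eventually_nhds_iff.mp hneg with ⟨δ1, hδ1, hP1⟩
  rcases Metric.eventually_nhds_iff.mp hmin with ⟨δ2, hδ2, hP2⟩
  set δ := min δ1 δ2 / 2 with hδdef
  have hδpos : 0 < δ := by positivity
  have hanti : StrictAntiOn g (Set.Icc 0 δ) := by
    apply strictAntiOn_of_deriv_neg (convex_Icc 0 δ)
    · exact (continuous_iff_continuousAt.mpr fun t => (hder t).continuousAt).continuousOn
    · intro t ht
      rw [interior_Icc] at ht
      rw [(hder t).deriv]
      apply hP1
      · rw [Real.dist_eq, sub_zero, abs_of_pos ht.1]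
        calc t < δ := ht.2
        _ ≤ δ1 := by rw [hδdef]; have := min_le_left δ1 δ2; linarith
      · exact ht.1
  have hlt : g δ < g 0 := hanti (by constructor <;> [rfl; positivity]) (by
      constructor <;> [positivity; rfl]) hδpos
  have hge : g 0 ≤ g δ := by
    apply hP2
    rw [Real.dist_eq, sub_zero, abs_of_pos hδpos]
    rw [hδdef]; have := min_le_right δ1 δ2; linarith
  linarith

-- new material
def mvCLM (A : Matrix (Fin n ⊕ Fin m) (Fin n ⊕ Fin m) ℝ) : Spc n m →L[ℝ] Spc n m :=
  LinearMap.toContinuousLinearMap (Matrix.toEuclideanLin A)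

lemma mvCLM_apply (A : Matrix (Fin n ⊕ Fin m) (Fin n ⊕ Fin m) ℝ) (v : Spc n m) :
    mvCLM A v = mulVecE A v := rfl

lemma mvCLM_apply' (A : Matrix (Fin n ⊕ Fin m) (Fin n ⊕ Fin m) ℝ) (v : Spc n m) (k) :
    mvCLM A v k = (A.mulVec v) k := rfl

def dualLM : (Spc n m →L[ℝ] ℝ) →ₗ[ℝ] Spc n m where
  toFun ℓ := ofVec (fun k => ℓ (ee k))
  map_add' ℓ₁ ℓ₂ := by apply spc_ext; intro k; rfl
  map_smul' c ℓ := by apply spc_ext; intro k; rfl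

def dualCLM : (Spc n m →L[ℝ] ℝ) →L[ℝ] Spc n m := LinearMap.toContinuousLinearMap dualLM

lemma dualCLM_apply (ℓ : Spc n m →L[ℝ] ℝ) (k) : dualCLM ℓ k = ℓ (ee k) := rfl

lemma gradient_eq_dualCLM (f : Spc n m → ℝ) (z : Spc n m) :
    gradient f z = dualCLM (fderiv ℝ f z) := by
  apply spc_ext; intro k
  rw [dualCLM_apply, gradient_apply_single]

lemma fderiv_diff (f : Spc n m → ℝ) (hf : ContDiff ℝ 3 f) :
    Differentiable ℝ (fderiv ℝ f) := by
  have h2 : ContDiff ℝ 2 (fderiv ℝ f) := (ContDiff.fderiv_right hf (by norm_num))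
  exact h2.differentiable (by norm_num)

lemma fderiv_fderiv_apply (f : Spc n m → ℝ) (hf : ContDiff ℝ 3 f) (z u v : Spc n m) :
    fderiv ℝ (fun w => fderiv ℝ f w u) z v = (fderiv ℝ (fderiv ℝ f) z v) u := by
  have h := ((ContinuousLinearMap.apply ℝ ℝ u).hasFDerivAt).comp z
    ((fderiv_diff f hf z).hasFDerivAt)
  have h3 : fderiv ℝ (fun w => fderiv ℝ f w u) z
      = (ContinuousLinearMap.apply ℝ ℝ u).comp (fderiv ℝ (fderiv ℝ f) z) := by
    rw [← h.fderiv]; rfl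
  rw [h3]; rfl

lemma hess_apply (f : Spc n m → ℝ) (hf : ContDiff ℝ 3 f) (z : Spc n m) (i j) :
    hess f z i j = (fderiv ℝ (fderiv ℝ f) z (ee i)) (ee j) := by
  show gradient (fun w => gradient f w j) z i = _
  rw [gradient_apply_single]
  have : (fun w => gradient f w j) = fun w => fderiv ℝ f w (ee j) := by
    funext w; exact gradient_apply_single f w j
  rw [this, fderiv_fderiv_apply f hf]

lemma hess_symm (f : Spc n m → ℝ) (hf : ContDiff ℝ 3 f) (z : Spc n m) (i j) :
    hess f z i j = hess f z j i := by
  rw [hess_apply f hf, hess_apply f hf]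
  exact second_derivative_symmetric
    (fun y => ((hf.differentiable (by norm_num)) y).hasFDerivAt)
    ((fderiv_diff f hf z).hasFDerivAt) _ _

lemma spc_decomp (v : Spc n m) : ∑ k, v k • ee k = v := by
  have := (EuclideanSpace.basisFun (Fin n ⊕ Fin m) ℝ).toBasis.sum_repr v
  simpa [ee, EuclideanSpace.basisFun_apply] using this

lemma hasFDerivAt_gradient (f : Spc n m → ℝ) (hf : ContDiff ℝ 3 f) (z : Spc n m) :
    HasFDerivAt (gradient f) (mvCLM (hess f z)) z := by
  have key : HasFDerivAt (fun w => dualCLM (fderiv ℝ f w))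
      (dualCLM.comp (fderiv ℝ (fderiv ℝ f) z)) z :=
    (dualCLM.hasFDerivAt (x := fderiv ℝ f z)).comp z ((fderiv_diff f hf z).hasFDerivAt)
  have hfun : (fun w => dualCLM (fderiv ℝ f w)) = gradient f := by
    funext w; rw [gradient_eq_dualCLM]
  rw [hfun] at key
  have heq : mvCLM (hess f z) = dualCLM.comp (fderiv ℝ (fderiv ℝ f) z) := by
    apply ContinuousLinearMap.ext; intro v
    apply spc_ext; intro l
    rw [ContinuousLinearMap.comp_apply, dualCLM_apply, mvCLM_apply']
    have hv : (fderiv ℝ (fderiv ℝ f) z) v (ee l)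
        = ∑ k, v k * hess f z k l := by
      conv_lhs => rw [← spc_decomp v]
      rw [map_sum, ContinuousLinearMap.sum_apply]
      apply Finset.sum_congr rfl
      intro k _
      rw [_root_.map_smul, ContinuousLinearMap.smul_apply, ← hess_apply f hf]
      simp [smul_eq_mul]
    rw [hv, Matrix.mulVec]
    simp only [dotProduct]
    apply Finset.sum_congr rfl
    intro k _
    show hess f z l k * v k = v k * hess f z k l
    rw [hess_symm f hf z l k]; ring
  rw [heq]; exact key


section Saddle
variable (f : Spc n m → ℝ) (zs : Spc n m)

lemma hasDerivAt_line (hf : ContDiff ℝ 3 f) (v : Spc n m) (t : ℝ) :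
    HasDerivAt (fun s : ℝ => f (zs + s • v)) ⟪v, gradient f (zs + t • v)⟫ t := by
  have h1 : HasDerivAt (fun s : ℝ => zs + s • v) v t := by
    simpa using ((hasDerivAt_id t).smul_const v).const_add zs
  have h2 : HasFDerivAt f (fderiv ℝ f (zs + t • v)) (zs + t • v) :=
    ((hf.differentiable (by norm_num)) _).hasFDerivAt
  have h3 := h2.comp_hasDerivAt t h1
  rw [← inner_gradient, real_inner_comm] at h3
  exact h3

lemma min_along (hzs : IsLocalSaddle f zs) (v : Spc n m)
    (hv : ∀ j, v (Sum.inr j) = 0) : IsLocalMin (fun t : ℝ => f (zs + t • v)) 0 := by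
  obtain ⟨U, hU, hsad⟩ := hzs
  have hc : Continuous (fun t : ℝ => zs + t • v) := by continuity
  have hev : ∀ᶠ t : ℝ in nhds 0, (zs + t • v) ∈ U := by
    have h := hc.continuousAt (x := (0:ℝ))
    have h0 : (zs + (0:ℝ) • v) = zs := by simp
    apply h.preimage_mem_nhds; rwa [h0]
  refine hev.mono fun t ht => ?_
  have hwx : withX (zs + t • v) zs = zs + t • v := by
    apply spc_ext; intro k
    cases k with
    | inl i => rfl
    | inr j =>
      show zs (Sum.inr j) = (zs + t • v) (Sum.inr j)
      have : (zs + t • v) (Sum.inr j) = zs (Sum.inr j) + t * v (Sum.inr j) := rfl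
      rw [this, hv j, mul_zero, add_zero]
  have := (hsad _ ht).2
  rw [hwx] at this
  simpa using this

lemma max_along (hzs : IsLocalSaddle f zs) (v : Spc n m)
    (hv : ∀ i, v (Sum.inl i) = 0) : IsLocalMax (fun t : ℝ => f (zs + t • v)) 0 := by
  obtain ⟨U, hU, hsad⟩ := hzs
  have hc : Continuous (fun t : ℝ => zs + t • v) := by continuity
  have hev : ∀ᶠ t : ℝ in nhds 0, (zs + t • v) ∈ U := by
    have h := hc.continuousAt (x := (0:ℝ))
    have h0 : (zs + (0:ℝ) • v) = zs := by simp
    apply h.preimage_mem_nhds; rwa [h0]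
  refine hev.mono fun t ht => ?_
  have hwx : withX zs (zs + t • v) = zs + t • v := by
    apply spc_ext; intro k
    cases k with
    | inl i =>
      show zs (Sum.inl i) = (zs + t • v) (Sum.inl i)
      have : (zs + t • v) (Sum.inl i) = zs (Sum.inl i) + t * v (Sum.inl i) := rfl
      rw [this, hv i, mul_zero, add_zero]
    | inr j => rfl
  have := (hsad _ ht).1
  rw [hwx] at this
  simpa using this

lemma grad_zero (hf : ContDiff ℝ 3 f) (hzs : IsLocalSaddle f zs) :
    gradient f zs = 0 := by
  apply spc_ext; intro k
  have hder := hasDerivAt_line f zs hf (ee k) 0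
  have hz0 : zs + (0:ℝ) • ee k = zs := by simp
  rw [hz0] at hder
  have hkey : ⟪ee k, gradient f zs⟫ = 0 := by
    cases k with
    | inl i =>
      have hmin := min_along f zs hzs (ee (Sum.inl i)) (fun j => by
        simp [ee, EuclideanSpace.single_apply])
      have := hmin.deriv_eq_zero
      rwa [hder.deriv] at this
    | inr j =>
      have hmax := max_along f zs hzs (ee (Sum.inr j)) (fun i => by
        simp [ee, EuclideanSpace.single_apply])
      have := hmax.deriv_eq_zero
      rwa [hder.deriv] at this
  rw [ee, EuclideanSpace.inner_single_left] at hkey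
  simpa using hkey

lemma hasDerivAt_dirgrad (hf : ContDiff ℝ 3 f) (v : Spc n m) :
    HasDerivAt (fun t : ℝ => ⟪v, gradient f (zs + t • v)⟫)
      ⟪v, mvCLM (hess f zs) v⟫ 0 := by
  have h1 : HasDerivAt (fun s : ℝ => zs + s • v) v 0 := by
    simpa using ((hasDerivAt_id (0:ℝ)).smul_const v).const_add zs
  have h2 : HasFDerivAt (gradient f) (mvCLM (hess f zs)) (zs + (0:ℝ) • v) := by
    have := hasFDerivAt_gradient f hf zs
    simpa using this
  have h3 := h2.comp_hasDerivAt 0 h1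
  have h4 := ((innerSL ℝ v).hasFDerivAt).comp_hasDerivAt 0 h3
  exact h4

lemma quad_dot_eq (A : Matrix (Fin n ⊕ Fin m) (Fin n ⊕ Fin m) ℝ)
    (p : (Fin n ⊕ Fin m) → ℝ) :
    ⟪ofVec p, mvCLM A (ofVec p)⟫ = p ⬝ᵥ (A.mulVec p) := by
  rw [PiLp.inner_apply]
  simp only [dotProduct, RCLike.inner_apply, conj_trivial]
  exact Finset.sum_congr rfl fun _ _ => mul_comm _ _

lemma quadx_nonneg (hf : ContDiff ℝ 3 f) (hzs : IsLocalSaddle f zs)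
    (p : (Fin n ⊕ Fin m) → ℝ) (hp : ∀ j, p (Sum.inr j) = 0) :
    0 ≤ p ⬝ᵥ ((hess f zs).mulVec p) := by
  rw [← quad_dot_eq]
  exact second_deriv_nonneg_of_isLocalMin
    (fun t => hasDerivAt_line f zs hf (ofVec p) t)
    (hasDerivAt_dirgrad f zs hf (ofVec p))
    (min_along f zs hzs (ofVec p) hp)

lemma quady_nonpos (hf : ContDiff ℝ 3 f) (hzs : IsLocalSaddle f zs)
    (q : (Fin n ⊕ Fin m) → ℝ) (hq : ∀ i, q (Sum.inl i) = 0) :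
    q ⬝ᵥ ((hess f zs).mulVec q) ≤ 0 := by
  have hneg : 0 ≤ -(q ⬝ᵥ ((hess f zs).mulVec q)) := by
    rw [← quad_dot_eq]
    have hmax := max_along f zs hzs (ofVec q) hq
    have hmin : IsLocalMin (fun t : ℝ => -(f (zs + t • ofVec q))) 0 := hmax.neg
    have h1 : ∀ t, HasDerivAt (fun s : ℝ => -(f (zs + s • ofVec q)))
        (-⟪ofVec q, gradient f (zs + t • ofVec q)⟫) t :=
      fun t => (hasDerivAt_line f zs hf (ofVec q) t).neg
    have h2 : HasDerivAt (fun t : ℝ => -⟪ofVec q, gradient f (zs + t • ofVec q)⟫)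
        (-⟪ofVec q, mvCLM (hess f zs) (ofVec q)⟫) 0 :=
      (hasDerivAt_dirgrad f zs hf (ofVec q)).neg
    simpa using second_deriv_nonneg_of_isLocalMin h1 h2 hmin
  linarith

end Saddle


section MvCLMAlg

lemma mvCLM_comp (A B : Matrix (Fin n ⊕ Fin m) (Fin n ⊕ Fin m) ℝ) :
    (mvCLM A).comp (mvCLM B) = mvCLM (A * B) := by
  apply ContinuousLinearMap.ext; intro v; apply spc_ext; intro k
  show ((A.mulVec (B.mulVec v))) k = ((A * B).mulVec v) k
  rw [Matrix.mulVec_mulVec]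

lemma mvCLM_one : mvCLM (1 : Matrix (Fin n ⊕ Fin m) (Fin n ⊕ Fin m) ℝ)
    = ContinuousLinearMap.id ℝ (Spc n m) := by
  apply ContinuousLinearMap.ext; intro v; apply spc_ext; intro k
  show ((1 : Matrix _ _ ℝ).mulVec v) k = v k
  rw [Matrix.one_mulVec]

lemma mvCLM_add (A B : Matrix (Fin n ⊕ Fin m) (Fin n ⊕ Fin m) ℝ) :
    mvCLM (A + B) = mvCLM A + mvCLM B := by
  apply ContinuousLinearMap.ext; intro v; apply spc_ext; intro k
  show ((A + B).mulVec v) k = (A.mulVec v) k + (B.mulVec v) k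
  rw [Matrix.add_mulVec]; rfl

lemma mvCLM_sub (A B : Matrix (Fin n ⊕ Fin m) (Fin n ⊕ Fin m) ℝ) :
    mvCLM (A - B) = mvCLM A - mvCLM B := by
  apply ContinuousLinearMap.ext; intro v; apply spc_ext; intro k
  show ((A - B).mulVec v) k = (A.mulVec v) k - (B.mulVec v) k
  rw [Matrix.sub_mulVec]; rfl

lemma mvCLM_smul (c : ℝ) (A : Matrix (Fin n ⊕ Fin m) (Fin n ⊕ Fin m) ℝ) :
    mvCLM (c • A) = c • mvCLM A := by
  apply ContinuousLinearMap.ext; intro v; apply spc_ext; intro k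
  show ((c • A).mulVec v) k = (c • (A.mulVec v)) k
  rw [Matrix.smul_mulVec]

lemma mvCLM_neg (A : Matrix (Fin n ⊕ Fin m) (Fin n ⊕ Fin m) ℝ) :
    mvCLM (-A) = -(mvCLM A) := by
  apply ContinuousLinearMap.ext; intro v; apply spc_ext; intro k
  show ((-A).mulVec v) k = (-(A.mulVec v)) k
  rw [Matrix.neg_mulVec]

end MvCLMAlg

section Geg

abbrev Dmat (n m : ℕ) : Matrix (Fin n ⊕ Fin m) (Fin n ⊕ Fin m) ℝ :=
  Matrix.diagonal (Sum.elim (fun _ => (-1:ℝ)) (fun _ => 1))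

variable (f : Spc n m → ℝ)

lemma Fvec_eq (z : Spc n m) : Fvec f z = mvCLM (-(Dmat n m)) (gradient f z) := by
  apply spc_ext; intro k
  set g : Spc n m := gradient f z with hg
  show Sum.elim (fun i => g (Sum.inl i)) (fun j => - g (Sum.inr j)) k
      = ((-(Dmat n m)).mulVec (fun k => g k)) k
  rw [Matrix.neg_mulVec]
  cases k with
  | inl i =>
    show g (Sum.inl i) = -((Dmat n m).mulVec (fun k => g k) (Sum.inl i))
    rw [Matrix.mulVec_diagonal]; simp
  | inr j =>
    show -g (Sum.inr j) = -((Dmat n m).mulVec (fun k => g k) (Sum.inr j))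
    rw [Matrix.mulVec_diagonal]; simp

lemma hasFDerivAt_Fvec (hf : ContDiff ℝ 3 f) (z : Spc n m) :
    HasFDerivAt (Fvec f) (mvCLM (-(Hmat f z))) z := by
  have key := ((mvCLM (-(Dmat n m))).hasFDerivAt).comp z (hasFDerivAt_gradient f hf z)
  have hfun : (fun w => mvCLM (-(Dmat n m)) (gradient f w)) = Fvec f := by
    funext w; rw [Fvec_eq]
  have hmat : (mvCLM (-(Dmat n m))).comp (mvCLM (hess f z)) = mvCLM (-(Hmat f z)) := by
    rw [mvCLM_comp, Matrix.neg_mul, Hmat]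
  rw [← hfun, ← hmat]
  exact key

variable (η τ γ : ℝ) (zs : Spc n m)

lemma Fvec_zero (hf : ContDiff ℝ 3 f) (hzs : IsLocalSaddle f zs) : Fvec f zs = 0 := by
  rw [Fvec_eq, grad_zero f zs hf hzs, map_zero]

lemma mulVecE_zero (A : Matrix (Fin n ⊕ Fin m) (Fin n ⊕ Fin m) ℝ) :
    mulVecE A 0 = 0 := by
  apply spc_ext; intro k
  show (A.mulVec 0) k = 0
  rw [Matrix.mulVec_zero]; rfl

lemma inner_arg_eq (hf : ContDiff ℝ 3 f) (hzs : IsLocalSaddle f zs) :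
    zs - η • mulVecE (Lam n m τ) (Fvec f zs) = zs := by
  rw [Fvec_zero f zs hf hzs, mulVecE_zero, smul_zero, sub_zero]

lemma geg_fixed (hf : ContDiff ℝ 3 f) (hzs : IsLocalSaddle f zs) :
    geg f η τ γ zs = zs := by
  rw [geg, inner_arg_eq f η τ zs hf hzs, Fvec_zero f zs hf hzs, mulVecE_zero,
    smul_zero, sub_zero]

lemma Jmat_fixed (hf : ContDiff ℝ 3 f) (hzs : IsLocalSaddle f zs) :
    Jmat f η τ γ zs = 1 + (γ * η) • ((Lam n m τ * Hmat f zs) *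
      (1 + η • (Lam n m τ * Hmat f zs))) := by
  rw [Jmat, inner_arg_eq f η τ zs hf hzs]

lemma hasFDerivAt_geg (hf : ContDiff ℝ 3 f) (hzs : IsLocalSaddle f zs) :
    HasFDerivAt (geg f η τ γ) (mvCLM (Jmat f η τ γ zs)) zs := by
  set K := Lam n m τ * Hmat f zs with hK
  -- inner map
  have hin : HasFDerivAt (fun z => z - η • mulVecE (Lam n m τ) (Fvec f z))
      (mvCLM (1 + η • K)) zs := by
    have h1 : HasFDerivAt (fun z => mulVecE (Lam n m τ) (Fvec f z))
        ((mvCLM (Lam n m τ)).comp (mvCLM (-(Hmat f zs)))) zs := by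
      have := ((mvCLM (Lam n m τ)).hasFDerivAt).comp zs (hasFDerivAt_Fvec f hf zs)
      exact this
    have h2 := (hasFDerivAt_id zs).sub (h1.const_smul η)
    have hmat : ContinuousLinearMap.id ℝ (Spc n m)
        - η • ((mvCLM (Lam n m τ)).comp (mvCLM (-(Hmat f zs))))
        = mvCLM (1 + η • K) := by
      rw [mvCLM_comp, Matrix.mul_neg, ← hK, ← mvCLM_one (n := n) (m := m)]
      rw [← mvCLM_smul, ← mvCLM_sub, smul_neg, sub_neg_eq_add]
    rw [← hmat]
    exact h2
  -- outer
  have harg : zs - η • mulVecE (Lam n m τ) (Fvec f zs) = zs :=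
    inner_arg_eq f η τ zs hf hzs
  have hFout : HasFDerivAt (Fvec f) (mvCLM (-(Hmat f zs)))
      (zs - η • mulVecE (Lam n m τ) (Fvec f zs)) := by
    rw [harg]; exact hasFDerivAt_Fvec f hf zs
  have hcomp := hFout.comp zs hin
  have h3 := ((mvCLM (Lam n m τ)).hasFDerivAt).comp zs hcomp
  have h4 := (hasFDerivAt_id zs).sub (h3.const_smul (γ * η))
  have hfun : (fun z => z - (γ * η) • mulVecE (Lam n m τ)
      (Fvec f (z - η • mulVecE (Lam n m τ) (Fvec f z)))) = geg f η τ γ := by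
    funext z; rw [geg]
  have hmat2 : ContinuousLinearMap.id ℝ (Spc n m) - (γ * η) •
      ((mvCLM (Lam n m τ)).comp ((mvCLM (-(Hmat f zs))).comp (mvCLM (1 + η • K))))
      = mvCLM (Jmat f η τ γ zs) := by
    rw [mvCLM_comp, mvCLM_comp, Jmat_fixed f η τ γ zs hf hzs]
    have hXY : Lam n m τ * (-Hmat f zs * (1 + η • K))
        = -((Lam n m τ * Hmat f zs) * (1 + η • K)) := by
      rw [Matrix.neg_mul, Matrix.mul_neg, ← Matrix.mul_assoc]
    rw [hXY, ← hK, mvCLM_neg, smul_neg, sub_neg_eq_add, mvCLM_add, mvCLM_one, mvCLM_smul]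
  rw [← hfun, ← hmat2]
  exact h4

end Geg


section EigenAnalysis
open Complex
set_option linter.unusedSectionVars false

variable {ι : Type*} [Fintype ι] [DecidableEq ι]

-- complexification of a real matrix
set_option linter.unusedSectionVars false

lemma mulVec_cmap (A : Matrix ι ι ℝ) (x : ι → ℂ) (k : ι) :
    ((A.map (algebraMap ℝ ℂ)) *ᵥ x) k
      = ((A *ᵥ fun l => (x l).re) k : ℝ) + ((A *ᵥ fun l => (x l).im) k : ℝ) * Complex.I := by
  simp only [Matrix.mulVec, dotProduct, Matrix.map_apply]
  apply Complex.ext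
  · simp [Complex.re_sum]
  · simp [Complex.im_sum]

lemma dot_star_mulVec_re (A : Matrix ι ι ℝ) (x : ι → ℂ) :
    (star x ⬝ᵥ ((A.map (algebraMap ℝ ℂ)) *ᵥ x)).re
      = (fun k => (x k).re) ⬝ᵥ (A *ᵥ fun l => (x l).re)
        + (fun k => (x k).im) ⬝ᵥ (A *ᵥ fun l => (x l).im) := by
  simp only [dotProduct, Pi.star_apply, Complex.re_sum, ← Finset.sum_add_distrib]
  apply Finset.sum_congr rfl
  intro k _
  rw [mulVec_cmap]
  simp [Complex.mul_re]

lemma dot_star_conj (A : Matrix ι ι ℝ) (hsym : ∀ i j, A i j = A j i) (x y : ι → ℂ) :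
    starRingEnd ℂ (star x ⬝ᵥ ((A.map (algebraMap ℝ ℂ)) *ᵥ y))
      = star y ⬝ᵥ ((A.map (algebraMap ℝ ℂ)) *ᵥ x) := by
  simp only [dotProduct, Matrix.mulVec, Matrix.map_apply, Pi.star_apply, map_sum,
    Finset.mul_sum, _root_.map_mul]
  rw [Finset.sum_comm]
  apply Finset.sum_congr rfl; intro k _
  apply Finset.sum_congr rfl; intro l _
  simp [Complex.conj_conj, Complex.conj_ofReal, hsym k l]
  ring

lemma exists_eigvec (M : Matrix ι ι ℂ) (μ : ℂ) (h : μ ∈ spectrum ℂ M) :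
    ∃ v : ι → ℂ, v ≠ 0 ∧ M *ᵥ v = μ • v := by
  have h2 : μ ∈ spectrum ℂ (Matrix.toLinAlgEquiv' M) := by
    rwa [AlgEquiv.spectrum_eq (Matrix.toLinAlgEquiv' : Matrix ι ι ℂ ≃ₐ[ℂ] _) M]
  have h3 : Module.End.HasEigenvalue (Matrix.toLinAlgEquiv' M) μ :=
    Module.End.hasEigenvalue_iff_mem_spectrum.mpr h2
  obtain ⟨v, hv⟩ := h3.exists_hasEigenvector
  refine ⟨v, hv.2, ?_⟩
  have := hv.1
  rw [Module.End.mem_eigenspace_iff] at this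
  exact this


lemma arith_PQ {P Q Mx τ : ℝ} (hP : 0 ≤ P) (hQ : 0 ≤ Q) (h1 : 1 ≤ Mx^2*τ^2) (h2 : 1 ≤ Mx^2) :
    P + Q ≤ Mx^2 * (τ^2 * P + Q) := by nlinarith

lemma arith_pos {P Q c : ℝ} (hP : 0 ≤ P) (hQ : 0 ≤ Q) (hPQ : 0 < P + Q) (hc : 0 < c) :
    0 < c * P + Q := by
  rcases hQ.lt_or_eq with h | h
  · nlinarith
  · nlinarith

lemma arith_re {x c ar br : ℝ} (hc : 0 < c) (har : 0 ≤ ar) (hbr : br ≤ 0)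
    (heq : ar - br = -x * c) : x ≤ 0 := by nlinarith

lemma arith_abs {x y : ℝ} (hx : 0 ≤ x) (hy : 0 ≤ y) (h : x^2 ≤ y^2) : x ≤ y := by nlinarith

lemma eig_props (A : Matrix (Fin n ⊕ Fin m) (Fin n ⊕ Fin m) ℝ)
    (τ L : ℝ) (hτ : 0 < τ) (hL : 0 < L)
    (hsym : ∀ i j, A i j = A j i)
    (hxx : ∀ p : (Fin n ⊕ Fin m) → ℝ, (∀ j, p (Sum.inr j) = 0) → 0 ≤ p ⬝ᵥ (A *ᵥ p))
    (hyy : ∀ q : (Fin n ⊕ Fin m) → ℝ, (∀ i, q (Sum.inl i) = 0) → q ⬝ᵥ (A *ᵥ q) ≤ 0)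
    (hbound : ∀ x : (Fin n ⊕ Fin m) → ℝ, (A *ᵥ x) ⬝ᵥ (A *ᵥ x) ≤ L^2 * (x ⬝ᵥ x))
    (hA : IsUnit A) (μ : ℂ)
    (hμ : μ ∈ spectrum ℂ ((Lam n m τ * (Dmat n m * A)).map (algebraMap ℝ ℂ))) :
    μ.re ≤ 0 ∧ μ ≠ 0 ∧ ‖μ‖ ≤ max (1/τ) 1 * L := by
  set K := Lam n m τ * (Dmat n m * A) with hK
  -- units
  have hLamU : IsUnit (Lam n m τ) := by
    rw [Matrix.isUnit_iff_isUnit_det, Lam, Matrix.det_diagonal, isUnit_iff_ne_zero]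
    apply Finset.prod_ne_zero_iff.mpr
    intro k _
    cases k <;> simp [Sum.elim] <;> positivity
  have hDU : IsUnit (Dmat n m) := by
    rw [Matrix.isUnit_iff_isUnit_det, Matrix.det_diagonal, isUnit_iff_ne_zero]
    apply Finset.prod_ne_zero_iff.mpr
    intro k _
    cases k <;> simp [Sum.elim]
  have hKU : IsUnit K := hLamU.mul (hDU.mul hA)
  have hKcU : IsUnit (K.map (algebraMap ℝ ℂ)) := by
    have : K.map (algebraMap ℝ ℂ) = (algebraMap ℝ ℂ).mapMatrix K := rfl
    rw [this]
    exact hKU.map _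
  have hμ0 : μ ≠ 0 := by
    intro h
    rw [h] at hμ
    exact (spectrum.zero_notMem_iff ℂ).mpr hKcU hμ
  -- eigenvector
  obtain ⟨v, hv0, hveq⟩ := exists_eigvec _ μ hμ
  set Ac := A.map (algebraMap ℝ ℂ) with hAc
  set u := Ac *ᵥ v with hu
  have hmapmul : K.map (algebraMap ℝ ℂ)
      = (Lam n m τ).map (algebraMap ℝ ℂ) * ((Dmat n m).map (algebraMap ℝ ℂ) * Ac) := by
    rw [hK, Matrix.map_mul, Matrix.map_mul]
  have hdiagL : (Lam n m τ).map (algebraMap ℝ ℂ)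
      = Matrix.diagonal (fun k => (algebraMap ℝ ℂ) (Sum.elim (fun _ => 1/τ) (fun _ => 1) k)) := by
    rw [Lam, Matrix.diagonal_map (map_zero _)]
  have hdiagD : (Dmat n m).map (algebraMap ℝ ℂ)
      = Matrix.diagonal (fun k => (algebraMap ℝ ℂ) (Sum.elim (fun _ => (-1:ℝ)) (fun _ => 1) k)) := by
    rw [Matrix.diagonal_map (map_zero _)]
  -- component equations
  have hcomp : ∀ k, (K.map (algebraMap ℝ ℂ) *ᵥ v) k = μ * v k := by
    intro k; rw [hveq]; rfl
  have huinl : ∀ i, u (Sum.inl i) = -(τ * μ * v (Sum.inl i)) := by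
    intro i
    have := hcomp (Sum.inl i)
    rw [hmapmul, ← Matrix.mulVec_mulVec, ← Matrix.mulVec_mulVec, hdiagL] at this
    rw [Matrix.mulVec_diagonal, hdiagD, Matrix.mulVec_diagonal] at this
    simp only [Sum.elim_inl, _root_.map_one, _root_.map_neg, one_mul] at this
    have hτc : (τ : ℂ) ≠ 0 := by exact_mod_cast ne_of_gt hτ
    push_cast at this
    field_simp at this
    show (Ac *ᵥ v) (Sum.inl i) = -(↑τ * μ * v (Sum.inl i))
    have e : (Ac *ᵥ v) (Sum.inl i) = τ * ((Ac *ᵥ v) (Sum.inl i) / τ) := by field_simp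
    linear_combination e - (τ:ℂ) * this
  have huinr : ∀ j, u (Sum.inr j) = μ * v (Sum.inr j) := by
    intro j
    have := hcomp (Sum.inr j)
    rw [hmapmul, ← Matrix.mulVec_mulVec, ← Matrix.mulVec_mulVec, hdiagL] at this
    rw [Matrix.mulVec_diagonal, hdiagD, Matrix.mulVec_diagonal] at this
    simpa using this
  -- split v
  set vx : (Fin n ⊕ Fin m) → ℂ := Sum.elim (fun i => v (Sum.inl i)) (fun _ => 0) with hvx
  set vy : (Fin n ⊕ Fin m) → ℂ := Sum.elim (fun _ => 0) (fun j => v (Sum.inr j)) with hvy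
  have hvsum : v = vx + vy := by
    funext k; cases k <;> simp [hvx, hvy]
  set P : ℝ := ∑ i, Complex.normSq (v (Sum.inl i)) with hP
  set Q : ℝ := ∑ j, Complex.normSq (v (Sum.inr j)) with hQ
  have hPnn : 0 ≤ P := Finset.sum_nonneg fun _ _ => Complex.normSq_nonneg _
  have hQnn : 0 ≤ Q := Finset.sum_nonneg fun _ _ => Complex.normSq_nonneg _
  have hPQpos : 0 < P + Q := by
    have hex : ∃ k, v k ≠ 0 := by
      by_contra hcon
      push_neg at hcon
      exact hv0 (funext hcon)
    obtain ⟨k0, hk0⟩ := hex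
    have hSeq : P + Q = ∑ k, Complex.normSq (v k) := by
      rw [hP, hQ, Fintype.sum_sum_type]
    rw [hSeq]
    apply Finset.sum_pos' (fun k _ => Complex.normSq_nonneg _)
    exact ⟨k0, Finset.mem_univ _, Complex.normSq_pos.mpr hk0⟩
  -- dot products
  set a := star vx ⬝ᵥ (Ac *ᵥ vx) with ha
  set b := star vy ⬝ᵥ (Ac *ᵥ vy) with hb
  set s := star vx ⬝ᵥ (Ac *ᵥ vy) with hs
  set s' := star vy ⬝ᵥ (Ac *ᵥ vx) with hs'
  have h1 : a + s = -(τ * μ) * P := by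
    have hL1 : star vx ⬝ᵥ u = a + s := by
      rw [hu]
      conv_lhs => rw [hvsum]
      rw [Matrix.mulVec_add, dotProduct_add]
    have hL2 : star vx ⬝ᵥ u = -(τ * μ) * P := by
      rw [dotProduct, Fintype.sum_sum_type]
      have hzero : ∀ j : Fin m, star vx (Sum.inr j) * u (Sum.inr j) = 0 := by
        intro j; simp [hvx]
      rw [Finset.sum_congr rfl (fun j _ => hzero j), Finset.sum_const_zero, add_zero]
      have : ∀ i : Fin n, star vx (Sum.inl i) * u (Sum.inl i)
          = -(τ * μ) * Complex.normSq (v (Sum.inl i)) := by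
        intro i
        rw [huinl]
        simp only [hvx, Pi.star_apply, Sum.elim_inl, Complex.star_def]
        rw [show (starRingEnd ℂ) (v (Sum.inl i)) * -(↑τ * μ * v (Sum.inl i))
            = -(τ * μ) * (v (Sum.inl i) * (starRingEnd ℂ) (v (Sum.inl i))) by ring]
        rw [Complex.mul_conj]
      rw [Finset.sum_congr rfl (fun i _ => this i), ← Finset.mul_sum, hP]
      push_cast
      ring
    rw [← hL1, hL2]
  have h2 : s' + b = μ * Q := by
    have hL1 : star vy ⬝ᵥ u = s' + b := by
      rw [hu]
      conv_lhs => rw [hvsum]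
      rw [Matrix.mulVec_add, dotProduct_add]
    have hL2 : star vy ⬝ᵥ u = μ * Q := by
      rw [dotProduct, Fintype.sum_sum_type]
      have hzero : ∀ i : Fin n, star vy (Sum.inl i) * u (Sum.inl i) = 0 := by
        intro i; simp [hvy]
      rw [Finset.sum_congr rfl (fun i _ => hzero i), Finset.sum_const_zero, zero_add]
      have : ∀ j : Fin m, star vy (Sum.inr j) * u (Sum.inr j)
          = μ * Complex.normSq (v (Sum.inr j)) := by
        intro j
        rw [huinr]
        simp only [hvy, Pi.star_apply, Sum.elim_inr, Complex.star_def]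
        rw [show (starRingEnd ℂ) (v (Sum.inr j)) * (μ * v (Sum.inr j))
            = μ * (v (Sum.inr j) * (starRingEnd ℂ) (v (Sum.inr j))) by ring]
        rw [Complex.mul_conj]
      rw [Finset.sum_congr rfl (fun j _ => this j), ← Finset.mul_sum, hQ]
      push_cast
      ring
    rw [← hL1, hL2]
  have hconjs : starRingEnd ℂ s' = s := by
    rw [hs', hs]
    exact dot_star_conj A hsym vy vx
  -- subtract
  have hsub : a - starRingEnd ℂ b = -(τ * μ) * P - (starRingEnd ℂ μ) * Q := by
    have hc2 := congrArg (starRingEnd ℂ) h2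
    rw [map_add, hconjs] at hc2
    have : (starRingEnd ℂ) (μ * (Q:ℂ)) = (starRingEnd ℂ μ) * Q := by
      rw [_root_.map_mul, Complex.conj_ofReal]
    rw [this] at hc2
    linear_combination h1 - hc2
  -- real parts
  have hare : 0 ≤ a.re := by
    rw [ha, hAc, dot_star_mulVec_re]
    have h1 := hxx (fun k => (vx k).re) (fun j => by simp [hvx])
    have h2 := hxx (fun k => (vx k).im) (fun j => by simp [hvx])
    linarith
  have hbre : b.re ≤ 0 := by
    rw [hb, hAc, dot_star_mulVec_re]
    have h1 := hyy (fun k => (vy k).re) (fun i => by simp [hvy])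
    have h2 := hyy (fun k => (vy k).im) (fun i => by simp [hvy])
    linarith
  have hrepart : a.re - b.re = -(μ.re) * (τ * P + Q) := by
    have := congrArg Complex.re hsub
    simp only [Complex.sub_re, Complex.conj_re, Complex.mul_re, Complex.neg_re, Complex.neg_im,
      Complex.ofReal_re, Complex.ofReal_im, Complex.conj_im] at this
    push_cast at this
    rw [this]
    simp [Complex.mul_re, Complex.mul_im]
    ring
  have hμre : μ.re ≤ 0 :=
    arith_re (arith_pos hPnn hQnn hPQpos hτ) hare hbre hrepart
  -- norm bound
  have husq : ∑ k, Complex.normSq (u k) ≤ L^2 * (P + Q) := by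
    have hcomp : ∀ k, Complex.normSq (u k)
        = ((A *ᵥ fun l => (v l).re) k)^2 + ((A *ᵥ fun l => (v l).im) k)^2 := by
      intro k
      rw [hu, hAc, mulVec_cmap]
      rw [Complex.normSq_add_mul_I]
    rw [Finset.sum_congr rfl (fun k _ => hcomp k), Finset.sum_add_distrib]
    have hb1 := hbound (fun l => (v l).re)
    have hb2 := hbound (fun l => (v l).im)
    have hd1 : (A *ᵥ fun l => (v l).re) ⬝ᵥ (A *ᵥ fun l => (v l).re)
        = ∑ k, ((A *ᵥ fun l => (v l).re) k)^2 := by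
      rw [dotProduct]; apply Finset.sum_congr rfl; intro k _; ring
    have hd2 : (A *ᵥ fun l => (v l).im) ⬝ᵥ (A *ᵥ fun l => (v l).im)
        = ∑ k, ((A *ᵥ fun l => (v l).im) k)^2 := by
      rw [dotProduct]; apply Finset.sum_congr rfl; intro k _; ring
    have hsPQ : ((fun l => (v l).re) ⬝ᵥ fun l => (v l).re)
        + ((fun l => (v l).im) ⬝ᵥ fun l => (v l).im) = P + Q := by
      have hSeq : P + Q = ∑ k, Complex.normSq (v k) := by
        rw [hP, hQ, Fintype.sum_sum_type]
      rw [hSeq]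
      simp only [dotProduct, ← Finset.sum_add_distrib]
      apply Finset.sum_congr rfl
      intro k _
      rw [Complex.normSq_apply]
    rw [← hd1, ← hd2]
    nlinarith [hb1, hb2]
  have husum : ∑ k, Complex.normSq (u k) = Complex.normSq μ * (τ^2 * P + Q) := by
    rw [Fintype.sum_sum_type]
    have h1 : ∀ i : Fin n, Complex.normSq (u (Sum.inl i))
        = τ^2 * Complex.normSq μ * Complex.normSq (v (Sum.inl i)) := by
      intro i; rw [huinl]
      rw [Complex.normSq_neg, Complex.normSq_mul, Complex.normSq_mul]
      rw [Complex.normSq_ofReal]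
      ring
    have h2 : ∀ j : Fin m, Complex.normSq (u (Sum.inr j))
        = Complex.normSq μ * Complex.normSq (v (Sum.inr j)) := by
      intro j; rw [huinr, Complex.normSq_mul]
    rw [Finset.sum_congr rfl (fun i _ => h1 i), Finset.sum_congr rfl (fun j _ => h2 j)]
    rw [← Finset.mul_sum, ← Finset.mul_sum, hP, hQ]
    ring
  have hM : Complex.normSq μ * (τ^2 * P + Q) ≤ L^2 * (P+Q) := by rw [← husum]; exact husq
  set Mx := max (1/τ) 1 with hMx
  have hMx1 : 1 ≤ Mx := le_max_right _ _
  have hMxτ : 1/τ ≤ Mx := le_max_left _ _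
  have hMxpos : 0 < Mx := lt_of_lt_of_le one_pos hMx1
  have habs : ‖μ‖ ≤ Mx * L := by
    have e1 : 1 ≤ Mx * τ := by
      rw [div_le_iff₀ hτ] at hMxτ
      linarith
    have e1sq : 1 ≤ Mx^2 * τ^2 := by nlinarith [e1, hMxpos, hτ]
    have e2 : 1 ≤ Mx^2 := by nlinarith [hMx1]
    have hPQle : P + Q ≤ Mx^2 * (τ^2 * P + Q) := arith_PQ hPnn hQnn e1sq e2
    have hden : 0 < τ^2 * P + Q := arith_pos hPnn hQnn hPQpos (by positivity)
    have hkey : Complex.normSq μ ≤ (Mx * L)^2 := by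
      have step : Complex.normSq μ * (τ^2 * P + Q) ≤ (Mx*L)^2 * (τ^2 * P + Q) := by
        have step2 : L^2 * (P + Q) ≤ L^2 * (Mx^2 * (τ^2 * P + Q)) :=
          mul_le_mul_of_nonneg_left hPQle (sq_nonneg L)
        calc Complex.normSq μ * (τ^2 * P + Q) ≤ L^2 * (P+Q) := hM
        _ ≤ L^2 * (Mx^2 * (τ^2 * P + Q)) := step2
        _ = (Mx*L)^2 * (τ^2*P+Q) := by ring
      exact le_of_mul_le_mul_right step hden
    have h1 : ‖μ‖^2 = Complex.normSq μ := Complex.sq_norm μ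
    exact arith_abs (norm_nonneg μ) (le_of_lt (mul_pos hMxpos hL)) (by rw [h1]; exact hkey)
  exact ⟨hμre, hμ0, habs⟩

end EigenAnalysis

section Scalar

lemma scalar_ineq (w : ℂ) (γ : ℝ) (hγ0 : 0 < γ) (hγ1 : γ ≤ 1) (hre : w.re ≤ 0)
    (hw0 : w ≠ 0) (hwlt : ‖w‖ < 1) :
    ‖1 + (γ:ℂ) * (w + w^2)‖ < 1 := by
  set a := w.re with ha
  set b := w.im with hb
  have hr1 : a^2 + b^2 < 1 := by
    have h := hwlt
    have h2 : Complex.normSq w < 1 := by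
      rw [← Complex.sq_norm]
      nlinarith [norm_nonneg w]
    rwa [Complex.normSq_apply, ← pow_two, ← pow_two] at h2
  have hr0 : 0 < a^2 + b^2 := by
    have h2 : 0 < Complex.normSq w := Complex.normSq_pos.mpr hw0
    rwa [Complex.normSq_apply, ← pow_two, ← pow_two] at h2
  set Ru : ℝ := a + a^2 - b^2 with hRu
  set U2 : ℝ := (a + a^2 - b^2)^2 + (b + 2*a*b)^2 with hU2
  have hU2nn : 0 ≤ U2 := by positivity
  have h1 : a * ((1+a)^2 + b^2) ≤ 0 :=
    mul_nonpos_iff.mpr (Or.inr ⟨hre, by positivity⟩)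
  have h2 : 0 < (a^2+b^2) * (1 - (a^2+b^2)) := mul_pos hr0 (by linarith)
  have hT : 2*Ru + U2 < 0 := by nlinarith [h1, h2]
  have h4 : 2*Ru + γ*U2 < 0 := by nlinarith [hT, hU2nn, hγ1]
  have h5 : γ * (2*Ru + γ*U2) < 0 := mul_neg_of_pos_of_neg hγ0 h4
  -- compute normSq of the target
  have hnsq : Complex.normSq (1 + (γ:ℂ) * (w + w^2)) = 1 + γ*(2*Ru + γ*U2) := by
    rw [Complex.normSq_apply]
    simp only [Complex.add_re, Complex.add_im, Complex.mul_re, Complex.mul_im,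
      Complex.one_re, Complex.one_im, Complex.ofReal_re, Complex.ofReal_im,
      pow_two, Complex.mul_re, Complex.mul_im, ← ha, ← hb]
    rw [hRu, hU2]
    ring
  have habs2 : (‖1 + (γ:ℂ) * (w + w^2)‖)^2 < 1 := by
    rw [Complex.sq_norm, hnsq]
    linarith
  nlinarith [norm_nonneg (1 + (γ:ℂ) * (w + w^2))]

end Scalar

section SpecMap
open Polynomial
set_option linter.unusedSectionVars false
variable {ι : Type*} [Fintype ι] [DecidableEq ι]

lemma cmap_add (A B : Matrix ι ι ℝ) :
    (A+B).map (algebraMap ℝ ℂ) = A.map (algebraMap ℝ ℂ) + B.map (algebraMap ℝ ℂ) := by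
  ext i j; simp

lemma cmap_smul (c : ℝ) (A : Matrix ι ι ℝ) :
    (c • A).map (algebraMap ℝ ℂ) = (c:ℂ) • A.map (algebraMap ℝ ℂ) := by
  ext i j; simp

lemma cmap_one : (1 : Matrix ι ι ℝ).map (algebraMap ℝ ℂ) = 1 := by
  ext i j
  by_cases h : i = j <;> simp [Matrix.one_apply, h]

lemma spec_map (K : Matrix ι ι ℝ) (c d : ℝ) (hc : c ≠ 0) (hd : d ≠ 0) (lam : ℂ)
    (h : lam ∈ spectrum ℂ ((1 + c • (K * (1 + d • K))).map (algebraMap ℝ ℂ))) :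
    ∃ μ ∈ spectrum ℂ (K.map (algebraMap ℝ ℂ)),
      lam = (c:ℂ)*(d:ℂ)*μ^2 + (c:ℂ)*μ + 1 := by
  set Kc := K.map (algebraMap ℝ ℂ) with hKc
  set p : ℂ[X] := C ((c:ℂ)*(d:ℂ)) * X^2 + C (c:ℂ) * X + C 1 with hp
  have hJc : (1 + c • (K * (1 + d • K))).map (algebraMap ℝ ℂ) = aeval Kc p := by
    rw [cmap_add, cmap_one, cmap_smul, Matrix.map_mul, cmap_add, cmap_one, cmap_smul, ← hKc]
    rw [hp]
    simp only [map_add, _root_.map_mul, aeval_C, aeval_X, aeval_X_pow, map_pow]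
    rw [mul_add, mul_one, Algebra.mul_smul_comm, smul_add, smul_smul, pow_two]
    simp [Algebra.algebraMap_eq_smul_one, smul_mul_assoc, one_mul, smul_smul, mul_comm]
    have hsm : ((c:ℂ) * (d:ℂ)) • (Kc * Kc) = (c * d) • (Kc * Kc) := by
      rw [show ((c:ℂ) * (d:ℂ)) = algebraMap ℝ ℂ (c*d) by push_cast; rfl]
      rw [algebraMap_smul]
    rw [hsm]
    abel
  rw [hJc] at h
  have hdeg : 0 < p.degree := by
    rw [hp]
    have : ((c:ℂ)*(d:ℂ)) ≠ 0 := by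
      simp [hc, hd]
    rw [Polynomial.degree_quadratic this]
    norm_num
  have := spectrum.map_polynomial_aeval_of_degree_pos Kc p hdeg
  rw [this] at h
  obtain ⟨μ, hμ, heval⟩ := h
  refine ⟨μ, hμ, ?_⟩
  rw [← heval, hp]
  simp only [Polynomial.eval_add, Polynomial.eval_mul, Polynomial.eval_pow,
    Polynomial.eval_C, Polynomial.eval_X]

end SpecMap

section Gelfand
open Filter
open scoped Matrix.Norms.L2Operator
set_option linter.unusedSectionVars false
variable {ι : Type*} [Fintype ι] [DecidableEq ι]

lemma pow_bound (J : Matrix ι ι ℂ) (hs : ∀ z ∈ spectrum ℂ J, ‖z‖ < 1) :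
    ∃ C : ℝ, 1 ≤ C ∧ ∃ r : ℝ, 0 < r ∧ r < 1 ∧ ∀ k : ℕ, ‖J^k‖ ≤ C * r^k := by
  have hρ : spectralRadius ℂ J < 1 := by
    rcases Set.eq_empty_or_nonempty (spectrum ℂ J) with he | hne
    · rw [spectralRadius, he]
      simp
    · apply spectrum.spectralRadius_lt_of_forall_lt_of_nonempty hne
      intro k hk
      have := hs k hk
      rw [← NNReal.coe_lt_coe]
      push_cast
      exact this
  obtain ⟨ρ', hρ'1, hρ'2⟩ := exists_between hρ
  have hρ'fin : ρ' ≠ ⊤ := by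
    intro h; rw [h] at hρ'2; exact (not_top_lt) hρ'2
  set r : ℝ := ρ'.toReal with hr
  have hρ'0 : 0 < ρ' := lt_of_le_of_lt zero_le hρ'1
  have hrpos : 0 < r := ENNReal.toReal_pos (ne_of_gt hρ'0) hρ'fin
  have hrlt : r < 1 := by
    rw [hr, ← ENNReal.toReal_one]
    exact ENNReal.toReal_strict_mono (by norm_num) hρ'2
  have hgel := spectrum.pow_nnnorm_pow_one_div_tendsto_nhds_spectralRadius J
  have hev : ∀ᶠ k : ℕ in atTop, (‖J^k‖₊ : ENNReal)^(1/(k:ℝ)) < ρ' :=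
    hgel.eventually_lt_const hρ'1
  rw [eventually_atTop] at hev
  obtain ⟨N0, hN0⟩ := hev
  set N := max N0 1 with hN
  have hbig : ∀ k, N ≤ k → ‖J^k‖ ≤ r^k := by
    intro k hk
    have hk0 : k ≠ 0 := by omega
    have h1 : (‖J^k‖₊ : ENNReal)^(1/(k:ℝ)) < ρ' := hN0 k (le_trans (le_max_left _ _) hk)
    have h2 : ((‖J^k‖₊ : ENNReal)^(1/(k:ℝ)))^(k:ℝ) ≤ ρ'^(k:ℝ) :=
      ENNReal.rpow_le_rpow (le_of_lt h1) (by positivity)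
    rw [← ENNReal.rpow_mul, one_div, inv_mul_cancel₀ (by exact_mod_cast hk0 : (k:ℝ) ≠ 0),
      ENNReal.rpow_one] at h2
    have h3 : (‖J^k‖₊ : ENNReal) ≤ ρ'^k := by
      rwa [← ENNReal.rpow_natCast ρ' k]
    have h4 : ‖J^k‖ ≤ (ρ'^k).toReal := by
      have := ENNReal.toReal_mono (by simp [hρ'fin, ENNReal.pow_ne_top]) h3
      simpa [coe_nnnorm] using this
    rwa [ENNReal.toReal_pow] at h4
  set C : ℝ := 1 + ∑ k ∈ Finset.range N, ‖J^k‖ / r^k with hC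
  have hCge : 1 ≤ C := by
    rw [hC]
    have : 0 ≤ ∑ k ∈ Finset.range N, ‖J^k‖ / r^k :=
      Finset.sum_nonneg fun k _ => by positivity
    linarith
  refine ⟨C, hCge, r, hrpos, hrlt, ?_⟩
  intro k
  rcases lt_or_ge k N with hlt | hge
  · have hmem : k ∈ Finset.range N := Finset.mem_range.mpr hlt
    have hle : ‖J^k‖ / r^k ≤ ∑ j ∈ Finset.range N, ‖J^j‖ / r^j :=
      Finset.single_le_sum (f := fun j => ‖J^j‖ / r^j) (fun j _ => by positivity) hmem
    have hrk : 0 < r^k := by positivity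
    rw [div_le_iff₀ hrk] at hle
    calc ‖J^k‖ ≤ (∑ j ∈ Finset.range N, ‖J^j‖ / r^j) * r^k := hle
    _ ≤ C * r^k := by
      apply mul_le_mul_of_nonneg_right _ (le_of_lt hrk)
      rw [hC]; linarith
  · calc ‖J^k‖ ≤ r^k := hbig k hge
    _ = 1 * r^k := (one_mul _).symm
    _ ≤ C * r^k := by
      apply mul_le_mul_of_nonneg_right hCge (by positivity)

lemma mulVec_complexify (J : Matrix ι ι ℝ) (x : ι → ℝ) :
    (J.map (algebraMap ℝ ℂ)) *ᵥ (fun k => (x k : ℂ)) = fun k => ((J *ᵥ x) k : ℂ) := by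
  funext k
  simp only [Matrix.mulVec, dotProduct, Matrix.map_apply]
  push_cast
  rfl

lemma norm_complexify (y : ι → ℝ) :
    ‖(WithLp.equiv 2 (ι → ℂ)).symm (fun k => (y k : ℂ))‖
      = ‖(WithLp.equiv 2 (ι → ℝ)).symm y‖ := by
  rw [EuclideanSpace.norm_eq, EuclideanSpace.norm_eq]
  congr 1
  apply Finset.sum_congr rfl
  intro k _
  simp

lemma map_pow_c (J : Matrix ι ι ℝ) (k : ℕ) :
    (J^k).map (algebraMap ℝ ℂ) = (J.map (algebraMap ℝ ℂ))^k := by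
  have h : ∀ M : Matrix ι ι ℝ, M.map (algebraMap ℝ ℂ) = (algebraMap ℝ ℂ).mapMatrix M :=
    fun M => rfl
  rw [h, h, map_pow]

lemma real_pow_bound (J : Matrix ι ι ℝ)
    (hs : ∀ z ∈ spectrum ℂ (J.map (algebraMap ℝ ℂ)), ‖z‖ < 1) :
    ∃ C : ℝ, 1 ≤ C ∧ ∃ r : ℝ, 0 < r ∧ r < 1 ∧ ∀ k : ℕ, ∀ x : EuclideanSpace ℝ ι,
      ‖(WithLp.equiv 2 (ι → ℝ)).symm ((J^k) *ᵥ (WithLp.equiv 2 (ι → ℝ) x))‖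
        ≤ C * r^k * ‖x‖ := by
  obtain ⟨C, hC, r, hr0, hr1, hpow⟩ := pow_bound (J.map (algebraMap ℝ ℂ)) hs
  refine ⟨C, hC, r, hr0, hr1, ?_⟩
  intro k x
  set xr : ι → ℝ := WithLp.equiv 2 (ι → ℝ) x with hxr
  have h1 : ‖(WithLp.equiv 2 (ι → ℝ)).symm ((J^k) *ᵥ xr)‖
      = ‖(WithLp.equiv 2 (ι → ℂ)).symm (((J.map (algebraMap ℝ ℂ))^k) *ᵥ (fun l => (xr l : ℂ)))‖ := by
    rw [← map_pow_c, mulVec_complexify, norm_complexify]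
  rw [h1]
  have h2 : (WithLp.equiv 2 (ι → ℂ)).symm (((J.map (algebraMap ℝ ℂ))^k) *ᵥ (fun l => (xr l : ℂ)))
      = Matrix.toEuclideanCLM (𝕜 := ℂ) ((J.map (algebraMap ℝ ℂ))^k)
          ((WithLp.equiv 2 (ι → ℂ)).symm (fun l => (xr l : ℂ))) := by
    rfl
  rw [h2]
  set T := Matrix.toEuclideanCLM (𝕜 := ℂ) ((J.map (algebraMap ℝ ℂ))^k) with hT
  set xc := (WithLp.equiv 2 (ι → ℂ)).symm (fun l => (xr l : ℂ)) with hxc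
  have h3 : ‖T xc‖ ≤ ‖T‖ * ‖xc‖ := ContinuousLinearMap.le_opNorm _ _
  have h4 : ‖xc‖ = ‖x‖ := by
    rw [hxc, norm_complexify]
    have : (WithLp.equiv 2 (ι → ℝ)).symm xr = x := by
      rw [hxr]; exact (WithLp.equiv 2 (ι → ℝ)).symm_apply_apply x
    rw [this]
  have h5 : ‖T‖ ≤ C * r^k := hpow k
  calc ‖T xc‖ ≤ ‖T‖ * ‖xc‖ := h3
  _ ≤ (C * r^k) * ‖x‖ := by
      rw [h4]
      apply mul_le_mul_of_nonneg_right h5 (norm_nonneg x)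
  _ = C * r^k * ‖x‖ := by ring

end Gelfand


section Lip
variable (f : Spc n m → ℝ)

lemma hess_op_bound (hf : ContDiff ℝ 3 f) {L : ℝ} (hL : 0 < L)
    (hLip : ∀ z w : Spc n m, ‖gradient f z - gradient f w‖ ≤ L * ‖z - w‖) (z : Spc n m)
    (x : Spc n m) : ‖mvCLM (hess f z) x‖ ≤ L * ‖x‖ := by
  have hlip : LipschitzWith (Real.toNNReal L) (gradient f) := by
    apply LipschitzWith.of_dist_le_mul
    intro a b
    rw [dist_eq_norm, dist_eq_norm]
    calc ‖gradient f a - gradient f b‖ ≤ L * ‖a - b‖ := hLip a b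
    _ = (Real.toNNReal L : ℝ) * ‖a - b‖ := by rw [Real.coe_toNNReal _ hL.le]
  have hop : ‖mvCLM (hess f z)‖ ≤ (Real.toNNReal L : ℝ) :=
    (hasFDerivAt_gradient f hf z).le_of_lipschitz hlip
  rw [Real.coe_toNNReal _ hL.le] at hop
  calc ‖mvCLM (hess f z) x‖ ≤ ‖mvCLM (hess f z)‖ * ‖x‖ :=
    ContinuousLinearMap.le_opNorm _ _
  _ ≤ L * ‖x‖ := mul_le_mul_of_nonneg_right hop (norm_nonneg x)

lemma dot_self_eq_norm_sq (y : (Fin n ⊕ Fin m) → ℝ) :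
    y ⬝ᵥ y = ‖ofVec (n := n) (m := m) y‖^2 := by
  rw [← real_inner_self_eq_norm_sq]
  rw [PiLp.inner_apply]
  simp only [dotProduct, RCLike.inner_apply, conj_trivial]
  rfl

lemma hess_dot_bound (hf : ContDiff ℝ 3 f) {L : ℝ} (hL : 0 < L)
    (hLip : ∀ z w : Spc n m, ‖gradient f z - gradient f w‖ ≤ L * ‖z - w‖) (z : Spc n m)
    (x : (Fin n ⊕ Fin m) → ℝ) :
    ((hess f z) *ᵥ x) ⬝ᵥ ((hess f z) *ᵥ x) ≤ L^2 * (x ⬝ᵥ x) := by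
  have h1 : ((hess f z) *ᵥ x) ⬝ᵥ ((hess f z) *ᵥ x)
      = ‖mvCLM (hess f z) (ofVec x)‖^2 := by
    rw [dot_self_eq_norm_sq]
    rfl
  have h2 : ‖mvCLM (hess f z) (ofVec x)‖ ≤ L * ‖ofVec (n := n) (m := m) x‖ :=
    hess_op_bound f hf hL hLip z (ofVec x)
  rw [h1, dot_self_eq_norm_sq]
  have hnn : (0:ℝ) ≤ ‖mvCLM (hess f z) (ofVec x)‖ := norm_nonneg _
  nlinarith [norm_nonneg (ofVec (n := n) (m := m) x)]

end Lip

section Stability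
open Filter

lemma asympStable_of_deriv (w : Spc n m → Spc n m) (zs : Spc n m)
    (J : Matrix (Fin n ⊕ Fin m) (Fin n ⊕ Fin m) ℝ)
    (hfix : w zs = zs) (hderiv : HasFDerivAt w (mvCLM J) zs)
    (hs : ∀ z ∈ spectrum ℂ (J.map (algebraMap ℝ ℂ)), ‖z‖ < 1) :
    AsympStable w zs := by
  obtain ⟨C, hC, r, hr0, hr1, hb⟩ := real_pow_bound J hs
  have hbm : ∀ (k : ℕ) (x : Spc n m), ‖mvCLM (J^k) x‖ ≤ C * r^k * ‖x‖ := fun k x => hb k x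
  have hCpos : 0 < C := lt_of_lt_of_le one_pos hC
  -- adapted norm
  set N : Spc n m → ℝ := fun x => ⨆ k : ℕ, ‖mvCLM (J^k) x‖ / r^k with hNdef
  have hbdd : ∀ x : Spc n m, BddAbove (Set.range fun k : ℕ => ‖mvCLM (J^k) x‖ / r^k) := by
    intro x
    refine ⟨C * ‖x‖, ?_⟩
    rintro y ⟨k, rfl⟩
    rw [div_le_iff₀ (by positivity)]
    calc ‖mvCLM (J^k) x‖ ≤ C * r^k * ‖x‖ := hbm k x
    _ = C * ‖x‖ * r^k := by ring
  have hN1 : ∀ x, ‖x‖ ≤ N x := by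
    intro x
    have h0 : ‖mvCLM (J^0) x‖ / r^0 = ‖x‖ := by
      rw [pow_zero, pow_zero, div_one, mvCLM_one]
      rfl
    rw [hNdef, ← h0]
    exact le_ciSup (hbdd x) 0
  have hN0 : ∀ x, 0 ≤ N x := fun x => le_trans (norm_nonneg x) (hN1 x)
  have hN2 : ∀ x, N x ≤ C * ‖x‖ := by
    intro x
    apply ciSup_le
    intro k
    rw [div_le_iff₀ (by positivity)]
    calc ‖mvCLM (J^k) x‖ ≤ C * r^k * ‖x‖ := hbm k x
    _ = C * ‖x‖ * r^k := by ring
  have hstep : ∀ (k : ℕ) (x : Spc n m), mvCLM (J^k) (mvCLM J x) = mvCLM (J^(k+1)) x := by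
    intro k x
    have := congrFun (congrArg (fun (T : Spc n m →L[ℝ] Spc n m) => (T : Spc n m → Spc n m))
      (mvCLM_comp (J^k) J)) x
    simp only [ContinuousLinearMap.coe_comp', Function.comp_apply] at this
    rw [this, ← pow_succ]
  have hN3 : ∀ x, N (mvCLM J x) ≤ r * N x := by
    intro x
    apply ciSup_le
    intro k
    rw [hstep k x]
    have hle : ‖mvCLM (J^(k+1)) x‖ / r^(k+1) ≤ N x := le_ciSup (hbdd x) (k+1)
    have : ‖mvCLM (J^(k+1)) x‖ / r^k = (‖mvCLM (J^(k+1)) x‖ / r^(k+1)) * r := by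
      field_simp
      ring
    rw [this]
    calc (‖mvCLM (J^(k+1)) x‖ / r^(k+1)) * r ≤ N x * r :=
      mul_le_mul_of_nonneg_right hle hr0.le
    _ = r * N x := by ring
  have hN4 : ∀ x y, N (x + y) ≤ N x + N y := by
    intro x y
    apply ciSup_le
    intro k
    have h1 : ‖mvCLM (J^k) (x + y)‖ / r^k
        ≤ ‖mvCLM (J^k) x‖ / r^k + ‖mvCLM (J^k) y‖ / r^k := by
      rw [← add_div]
      apply div_le_div_of_nonneg_right _ (by positivity)
      · rw [map_add]
        exact norm_add_le _ _
    calc ‖mvCLM (J^k) (x + y)‖ / r^k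
        ≤ ‖mvCLM (J^k) x‖ / r^k + ‖mvCLM (J^k) y‖ / r^k := h1
    _ ≤ N x + N y := add_le_add (le_ciSup (hbdd x) k) (le_ciSup (hbdd y) k)
  -- little-o
  set ε : ℝ := (1 - r) / (2 * C) with hε
  have hεpos : 0 < ε := by
    rw [hε]; exact div_pos (by linarith) (by positivity)
  have hlo := hderiv.isLittleO.def hεpos
  rw [Metric.eventually_nhds_iff] at hlo
  obtain ⟨δ, hδpos, hδ⟩ := hlo
  set ρ : ℝ := (1 + r) / 2 with hρ
  have hρ1 : ρ < 1 := by rw [hρ]; linarith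
  have hρ0 : 0 < ρ := by rw [hρ]; linarith
  have hrρ : r + C * ε ≤ ρ := by
    rw [hρ, hε]
    rw [show C * ((1-r)/(2*C)) = (1-r)/2 by field_simp]
    linarith
  -- contraction step
  have key : ∀ z : Spc n m, ‖z - zs‖ < δ → N (w z - zs) ≤ ρ * N (z - zs) := by
    intro z hz
    have hdist : dist z zs < δ := by rwa [dist_eq_norm]
    have herr := hδ hdist
    simp only [hfix] at herr
    set e := w z - zs - mvCLM J (z - zs) with he
    have hsplit : w z - zs = mvCLM J (z - zs) + e := by rw [he]; abel
    have hNe : N e ≤ C * ε * N (z - zs) := by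
      calc N e ≤ C * ‖e‖ := hN2 e
      _ ≤ C * (ε * ‖z - zs‖) := by
          apply mul_le_mul_of_nonneg_left _ hCpos.le
          · rw [he]
            exact herr
      _ = C * ε * ‖z - zs‖ := by ring
      _ ≤ C * ε * N (z - zs) := by
          apply mul_le_mul_of_nonneg_left (hN1 _) (by positivity)
    calc N (w z - zs) = N (mvCLM J (z - zs) + e) := by rw [← hsplit]
    _ ≤ N (mvCLM J (z - zs)) + N e := hN4 _ _
    _ ≤ r * N (z - zs) + C * ε * N (z - zs) := add_le_add (hN3 _) hNe
    _ = (r + C * ε) * N (z - zs) := by ring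
    _ ≤ ρ * N (z - zs) := mul_le_mul_of_nonneg_right hrρ (hN0 _)
  -- iterates
  have hiter : ∀ (z₀ : Spc n m), N (z₀ - zs) < δ →
      ∀ k : ℕ, N (w^[k] z₀ - zs) ≤ ρ^k * N (z₀ - zs) := by
    intro z₀ hz₀ k
    induction k with
    | zero => simp
    | succ k ih =>
      have hcur : N (w^[k] z₀ - zs) < δ := by
        have hρk : ρ^k ≤ 1 := pow_le_one₀ hρ0.le hρ1.le
        have : N (w^[k] z₀ - zs) ≤ N (z₀ - zs) := by
          calc N (w^[k] z₀ - zs) ≤ ρ^k * N (z₀ - zs) := ih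
          _ ≤ 1 * N (z₀ - zs) := mul_le_mul_of_nonneg_right hρk (hN0 _)
          _ = N (z₀ - zs) := one_mul _
        linarith
      have hnorm : ‖w^[k] z₀ - zs‖ < δ := lt_of_le_of_lt (le_trans (hN1 _) (le_refl _)) hcur
      rw [Function.iterate_succ_apply']
      calc N (w (w^[k] z₀) - zs) ≤ ρ * N (w^[k] z₀ - zs) := key _ hnorm
      _ ≤ ρ * (ρ^k * N (z₀ - zs)) := mul_le_mul_of_nonneg_left ih hρ0.le
      _ = ρ^(k+1) * N (z₀ - zs) := by ring
  constructor
  · -- stability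
    intro ε' hε'
    refine ⟨min (δ / (2 * C)) (ε' / C), by positivity, ?_⟩
    intro z₀ hz₀ k
    have hd : dist z₀ zs = ‖z₀ - zs‖ := dist_eq_norm _ _
    have hN₀ : N (z₀ - zs) ≤ C * ‖z₀ - zs‖ := hN2 _
    have hz₁ : ‖z₀ - zs‖ ≤ δ / (2 * C) := by
      rw [← hd]; exact le_trans hz₀ (min_le_left _ _)
    have hz₂ : ‖z₀ - zs‖ ≤ ε' / C := by
      rw [← hd]; exact le_trans hz₀ (min_le_right _ _)
    have hNδ : N (z₀ - zs) < δ := by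
      calc N (z₀ - zs) ≤ C * ‖z₀ - zs‖ := hN₀
      _ ≤ C * (δ / (2 * C)) := mul_le_mul_of_nonneg_left hz₁ hCpos.le
      _ = δ / 2 := by field_simp
      _ < δ := by linarith
    have hNε : N (z₀ - zs) ≤ ε' := by
      calc N (z₀ - zs) ≤ C * ‖z₀ - zs‖ := hN₀
      _ ≤ C * (ε' / C) := mul_le_mul_of_nonneg_left hz₂ hCpos.le
      _ = ε' := by field_simp
    have hρk : ρ^k ≤ 1 := pow_le_one₀ hρ0.le hρ1.le
    calc dist (w^[k] z₀) zs = ‖w^[k] z₀ - zs‖ := dist_eq_norm _ _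
    _ ≤ N (w^[k] z₀ - zs) := hN1 _
    _ ≤ ρ^k * N (z₀ - zs) := hiter z₀ hNδ k
    _ ≤ 1 * N (z₀ - zs) := mul_le_mul_of_nonneg_right hρk (hN0 _)
    _ = N (z₀ - zs) := one_mul _
    _ ≤ ε' := hNε
  · -- attractivity
    refine ⟨δ / (2 * C), by positivity, ?_⟩
    intro z₀ hz₀
    have hd : dist z₀ zs = ‖z₀ - zs‖ := dist_eq_norm _ _
    have hz₁ : ‖z₀ - zs‖ ≤ δ / (2 * C) := by rw [← hd]; exact hz₀
    have hNδ : N (z₀ - zs) < δ := by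
      calc N (z₀ - zs) ≤ C * ‖z₀ - zs‖ := hN2 _
      _ ≤ C * (δ / (2 * C)) := mul_le_mul_of_nonneg_left hz₁ hCpos.le
      _ = δ / 2 := by field_simp
      _ < δ := by linarith
    rw [tendsto_iff_dist_tendsto_zero]
    apply squeeze_zero (fun k => dist_nonneg)
      (g := fun k => ρ^k * N (z₀ - zs))
    · intro k
      calc dist (w^[k] z₀) zs = ‖w^[k] z₀ - zs‖ := dist_eq_norm _ _
      _ ≤ N (w^[k] z₀ - zs) := hN1 _
      _ ≤ ρ^k * N (z₀ - zs) := hiter z₀ hNδ k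
    · have := (tendsto_pow_atTop_nhds_zero_of_lt_one hρ0.le hρ1).mul_const (N (z₀ - zs))
      simpa using this
end Stability


lemma min_max_eq_one {τ : ℝ} (hτ : 0 < τ) : min 1 τ * max (1/τ) 1 = 1 := by
  rcases le_total τ 1 with h | h
  · rw [min_eq_right h, max_eq_left (by rw [le_div_iff₀ hτ]; linarith)]
    field_simp
  · rw [min_eq_left h, max_eq_right (by rw [div_le_one hτ]; linarith)]
    simp

end Stmt5Aux

open Stmt5Aux in
/-- for η < min{1,τ}/L and γ ∈ (0,1], every local saddle point is a fixed
point of GEG whose Jacobian has spectral radius < 1, hence a locally asymptotically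
stable equilibrium of the GEG dynamics. -/
theorem stmt5 (n m : ℕ) (f : Spc n m → ℝ) (L τ η γ : ℝ)
    (hf : ContDiff ℝ 3 f) (hL : 0 < L)
    (hLip : ∀ z w : Spc n m, ‖gradient f z - gradient f w‖ ≤ L * ‖z - w‖)
    (hinv : ∀ z : Spc n m, IsLocalSaddle f z → IsUnit (hess f z))
    (hτ : 0 < τ) (hη : η ∈ Set.Ioo 0 (min 1 τ / L))
    (hγ : γ ∈ Set.Ioc (0 : ℝ) 1)
    (zs : Spc n m) (hzs : IsLocalSaddle f zs) :
    geg f η τ γ zs = zs ∧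
    (∀ lam ∈ cSpec (Jmat f η τ γ zs), ‖lam‖ < 1) ∧
    AsympStable (geg f η τ γ) zs := by
  obtain ⟨hη0, hηlt⟩ := hη
  obtain ⟨hγ0, hγ1⟩ := hγ
  have hfix : geg f η τ γ zs = zs := geg_fixed f η τ γ zs hf hzs
  have hspec : ∀ lam ∈ cSpec (Jmat f η τ γ zs), ‖lam‖ < 1 := by
    intro lam hlam
    rw [cSpec, Jmat_fixed f η τ γ zs hf hzs] at hlam
    set K := Lam n m τ * Hmat f zs with hK
    have hc : (γ * η : ℝ) ≠ 0 := by positivity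
    have hd : (η : ℝ) ≠ 0 := ne_of_gt hη0
    obtain ⟨μ, hμspec, hlameq⟩ := spec_map K (γ*η) η hc hd lam hlam
    have hHD : K = Lam n m τ * (Dmat n m * hess f zs) := rfl
    rw [hHD] at hμspec
    obtain ⟨hre, hμ0, habs⟩ := eig_props (hess f zs) τ L hτ hL
      (fun i j => hess_symm f hf zs i j)
      (quadx_nonneg f zs hf hzs)
      (quady_nonpos f zs hf hzs)
      (hess_dot_bound f hf hL hLip zs)
      (hinv zs hzs) μ hμspec
    set w : ℂ := (η:ℂ) * μ with hw
    have hwre : w.re ≤ 0 := by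
      rw [hw, Complex.mul_re]
      simp only [Complex.ofReal_re, Complex.ofReal_im, zero_mul, sub_zero]
      exact mul_nonpos_iff.mpr (Or.inl ⟨hη0.le, hre⟩)
    have hw0 : w ≠ 0 := mul_ne_zero (by exact_mod_cast hd) hμ0
    have hMxL : 0 < max (1/τ) 1 * L := by positivity
    have hwabs : ‖w‖ < 1 := by
      rw [hw, norm_mul, Complex.norm_real, Real.norm_of_nonneg hη0.le]
      calc η * ‖μ‖ ≤ η * (max (1/τ) 1 * L) :=
        mul_le_mul_of_nonneg_left habs hη0.le
      _ < (min 1 τ / L) * (max (1/τ) 1 * L) := mul_lt_mul_of_pos_right hηlt hMxL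
      _ = min 1 τ * max (1/τ) 1 := by field_simp
      _ = 1 := min_max_eq_one hτ
    have hineq := scalar_ineq w γ hγ0 hγ1 hwre hw0 hwabs
    have hlam2 : lam = 1 + (γ:ℂ) * (w + w^2) := by
      rw [hlameq, hw]
      push_cast
      ring
    rw [hlam2]
    exact hineq
  refine ⟨hfix, hspec, ?_⟩
  exact asympStable_of_deriv (geg f η τ γ) zs (Jmat f η τ γ zs) hfix
    (hasFDerivAt_geg f η τ γ zs hf hzs) hspec
end
end

section
/- Let a ∈ (−1, 0] and b ∈ (−√(1−a²), √(1−a²)) with (a, b) ≠ (0, 0). Then for every γ ∈ (0, 1], (1 + γ(a² − b² + a))² + γ²(2ab + b)² < 1; equivalently, for the complex number κ with ηκ = a + ib, |1 + γ(a+ib)(1 + a + ib)| < 1. -/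
open Complex in
/-- for a ∈ (−1,0], b ∈ (−√(1−a²), √(1−a²)), (a,b) ≠ (0,0) and γ ∈ (0,1],
(1 + γ(a² − b² + a))² + γ²(2ab + b)² < 1; equivalently |1 + γ(a+ib)(1+a+ib)| < 1. -/
theorem stmt10 (a b : ℝ) (ha : a ∈ Set.Ioc (-1 : ℝ) 0)
    (hb : b ∈ Set.Ioo (-Real.sqrt (1 - a ^ 2)) (Real.sqrt (1 - a ^ 2)))
    (hab : (a, b) ≠ (0, 0)) (γ : ℝ) (hγ : γ ∈ Set.Ioc (0 : ℝ) 1) :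
    (1 + γ * (a ^ 2 - b ^ 2 + a)) ^ 2 + γ ^ 2 * (2 * a * b + b) ^ 2 < 1 ∧
    ‖(1 + (γ : ℂ) * ((a : ℂ) + (b : ℂ) * I) * (1 + (a : ℂ) + (b : ℂ) * I))‖ < 1 := by
  obtain ⟨ha1, ha2⟩ := ha
  obtain ⟨hb1, hb2⟩ := hb
  obtain ⟨hγ1, hγ2⟩ := hγ
  have h0 : (0:ℝ) ≤ 1 - a ^ 2 := by nlinarith
  have h1 : b ^ 2 < 1 - a ^ 2 := by
    nlinarith [Real.sq_sqrt h0, mul_pos (sub_pos.2 hb2)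
      (show 0 < Real.sqrt (1 - a ^ 2) + b by linarith)]
  have hs : 0 < a ^ 2 + b ^ 2 := by
    have h : a ≠ 0 ∨ b ≠ 0 := by
      by_contra h; push_neg at h; exact hab (by simp [h.1, h.2])
    rcases h with h | h
    · positivity
    · positivity
  have h3 : a * ((1 + a) ^ 2 + b ^ 2) ≤ 0 :=
    mul_nonpos_of_nonpos_of_nonneg ha2 (by positivity)
  have hX : (0:ℝ) ≤ (a ^ 2 + b ^ 2) * ((1 + a) ^ 2 + b ^ 2) := by positivity
  have h2 : (a ^ 2 + b ^ 2) * ((1 + a) ^ 2 + b ^ 2) < 2 * (a ^ 2 + b ^ 2) * (1 + a) := by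
    nlinarith [hs, h1]
  have key : γ * ((a ^ 2 + b ^ 2) * ((1 + a) ^ 2 + b ^ 2)) < 2 * (b ^ 2 - a ^ 2 - a) := by
    have hγX : γ * ((a ^ 2 + b ^ 2) * ((1 + a) ^ 2 + b ^ 2)) ≤
        (a ^ 2 + b ^ 2) * ((1 + a) ^ 2 + b ^ 2) := by nlinarith
    nlinarith [h2, h3]
  have main : (1 + γ * (a ^ 2 - b ^ 2 + a)) ^ 2 + γ ^ 2 * (2 * a * b + b) ^ 2 < 1 := by
    nlinarith [mul_pos hγ1 (show 0 < 2 * (b ^ 2 - a ^ 2 - a) -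
      γ * ((a ^ 2 + b ^ 2) * ((1 + a) ^ 2 + b ^ 2)) by linarith)]
  refine ⟨main, ?_⟩
  have habs : (‖(1 + (γ : ℂ) * ((a : ℂ) + (b : ℂ) * I) * (1 + (a : ℂ) + (b : ℂ) * I))‖) ^ 2
      = (1 + γ * (a ^ 2 - b ^ 2 + a)) ^ 2 + γ ^ 2 * (2 * a * b + b) ^ 2 := by
    rw [Complex.sq_norm, Complex.normSq_apply]
    simp [Complex.add_re, Complex.add_im, Complex.mul_re, Complex.mul_im]
    ring
  nlinarith [norm_nonneg (1 + (γ : ℂ) * ((a : ℂ) + (b : ℂ) * I) * (1 + (a : ℂ) + (b : ℂ) * I)), habs, main]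
end

section
/- Let a ∈ (−1, 0] and b ∈ (−√(1−a²), √(1−a²)) with (a, b) ≠ (0, 0). Then (a² − b² + a)² + (2ab + b)² > 0 and −2(a² − b² + a) / ((a² − b² + a)² + (2ab + b)²) > 1. -/
/-- for a ∈ (−1,0], b ∈ (−√(1−a²), √(1−a²)) with (a,b) ≠ (0,0),
the denominator (a²−b²+a)² + (2ab+b)² is positive and
−2(a²−b²+a)/((a²−b²+a)² + (2ab+b)²) > 1. -/
theorem stmt11 (a b : ℝ) (ha : a ∈ Set.Ioc (-1 : ℝ) 0)
    (hb : b ∈ Set.Ioo (-Real.sqrt (1 - a ^ 2)) (Real.sqrt (1 - a ^ 2)))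
    (hab : (a, b) ≠ (0, 0)) :
    0 < (a ^ 2 - b ^ 2 + a) ^ 2 + (2 * a * b + b) ^ 2 ∧
    1 < -2 * (a ^ 2 - b ^ 2 + a) / ((a ^ 2 - b ^ 2 + a) ^ 2 + (2 * a * b + b) ^ 2) := by
  obtain ⟨ha1, ha2⟩ := ha
  obtain ⟨hb1, hb2⟩ := hb
  have hnn : (0:ℝ) ≤ 1 - a ^ 2 := by nlinarith
  have hbsq : b ^ 2 < 1 - a ^ 2 := by
    have := Real.sq_sqrt hnn
    nlinarith [sq_lt_sq' hb1 hb2]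
  have hab' : a ≠ 0 ∨ b ≠ 0 := by
    by_contra h
    push_neg at h
    exact hab (by simp [h.1, h.2])
  have hD : 0 < (a ^ 2 - b ^ 2 + a) ^ 2 + (2 * a * b + b) ^ 2 := by
    have key : (a ^ 2 - b ^ 2 + a) ^ 2 + (2 * a * b + b) ^ 2
        = (a ^ 2 + b ^ 2) * ((a + 1) ^ 2 + b ^ 2) := by ring
    rw [key]
    rcases hab' with h | h
    · have h1 : 0 < a ^ 2 + b ^ 2 := by positivity
      have h2 : 0 < (a + 1) ^ 2 + b ^ 2 := by
        have : a + 1 ≠ 0 := by intro hc; nlinarith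
        positivity
      exact mul_pos h1 h2
    · have h1 : 0 < a ^ 2 + b ^ 2 := by positivity
      have h2 : 0 < (a + 1) ^ 2 + b ^ 2 := by positivity
      exact mul_pos h1 h2
  refine ⟨hD, ?_⟩
  rw [lt_div_iff₀ hD]
  have hE : (a ^ 2 - b ^ 2 + a) ^ 2 + (2 * a * b + b) ^ 2 + 2 * (a ^ 2 - b ^ 2 + a) < 0 := by
    rcases hab' with h | h
    · have ha0 : a < 0 := lt_of_le_of_ne ha2 h
      nlinarith [sq_nonneg b, sq_nonneg (a*(a+1)), mul_pos (neg_pos.2 ha0) (by linarith : (0:ℝ) < a + 1), sq_nonneg (b^2 + a*(a+1))]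
    · have hb0 : 0 < b ^ 2 := by positivity
      nlinarith [sq_nonneg (a*(a+1)), mul_nonneg (neg_nonneg.2 ha2) (by linarith : (0:ℝ) ≤ a + 1), sq_nonneg (b^2 + a*(a+1))]
  linarith
end

section
/- Let f: ℝ × ℝ → ℝ be f(x, y) = xy and consider the τ-GDA map w_τ(z) = z − ηΛ_τ F(z) with Jacobian J_τ(z) = I + ηΛ_τ H(z). Then for all η > 0 and τ > 0, the complex eigenvalues of J_τ(0,0) are 1 ± (η/√τ)·i, so the spectral radius of J_τ(0,0) equals √(1 + η²/τ) and is strictly greater than 1; hence the critical point (0,0) is an unstable equilibrium of τ-GDA for every choice of η, τ > 0. -/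
open Matrix MeasureTheory

noncomputable section

variable {n m : ℕ}

def gda (f : Spc n m → ℝ) (η τ : ℝ) (z : Spc n m) : Spc n m :=
  z - η • mulVecE (Lam n m τ) (Fvec f z)

def Jgda (f : Spc n m → ℝ) (η τ : ℝ) (z : Spc n m) :
    Matrix (Fin n ⊕ Fin m) (Fin n ⊕ Fin m) ℝ :=
  1 + η • (Lam n m τ * Hmat f z)


section Aux

private lemma grad_coord' (j : Fin 1 ⊕ Fin 1) (x : Spc 1 1) :
    HasGradientAt (fun w : Spc 1 1 => w j) (EuclideanSpace.single j 1) x := by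
  rw [hasGradientAt_iff_hasFDerivAt]
  have h : (InnerProductSpace.toDual ℝ (Spc 1 1)) (EuclideanSpace.single j 1)
      = EuclideanSpace.proj (𝕜 := ℝ) j := by
    ext w
    simp [EuclideanSpace.inner_single_left]
  rw [h]
  exact (EuclideanSpace.proj (𝕜 := ℝ) j).hasFDerivAt

private lemma grad_f' (z : Spc 1 1) (f : Spc 1 1 → ℝ)
    (hf : f = fun z => z (Sum.inl 0) * z (Sum.inr 0)) :
    HasGradientAt f (ofVec (Sum.elim (fun _ => z (Sum.inr 0)) (fun _ => z (Sum.inl 0)))) z := by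
  rw [hasGradientAt_iff_hasFDerivAt, hf]
  have h : (InnerProductSpace.toDual ℝ (Spc 1 1))
      (ofVec (Sum.elim (fun _ => z (Sum.inr 0)) (fun _ => z (Sum.inl 0))))
      = z (Sum.inl 0) • (EuclideanSpace.proj (𝕜 := ℝ) (Sum.inr 0 : Fin 1 ⊕ Fin 1))
        + z (Sum.inr 0) • (EuclideanSpace.proj (𝕜 := ℝ) (Sum.inl 0 : Fin 1 ⊕ Fin 1)) := by
    ext w
    simp [PiLp.inner_apply, Fintype.sum_sum_type, ofVec, mul_comm, add_comm]
  rw [h]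
  exact ((EuclideanSpace.proj (𝕜 := ℝ) (Sum.inl 0 : Fin 1 ⊕ Fin 1)).hasFDerivAt (x := z)).mul
    ((EuclideanSpace.proj (𝕜 := ℝ) (Sum.inr 0 : Fin 1 ⊕ Fin 1)).hasFDerivAt (x := z))

private lemma grad_f_apply' (z : Spc 1 1) (f : Spc 1 1 → ℝ)
    (hf : f = fun z => z (Sum.inl 0) * z (Sum.inr 0)) (j : Fin 1 ⊕ Fin 1) :
    gradient f z j = Sum.elim (fun _ => z (Sum.inr 0)) (fun _ => z (Sum.inl 0)) j := by
  rw [(grad_f' z f hf).gradient]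
  rfl

private lemma hess_eq' (z : Spc 1 1) (f : Spc 1 1 → ℝ)
    (hf : f = fun z => z (Sum.inl 0) * z (Sum.inr 0)) (i j : Fin 1 ⊕ Fin 1) :
    hess f z i j = if i = j then 0 else 1 := by
  have key : ∀ j : Fin 1 ⊕ Fin 1, (fun w : Spc 1 1 => gradient f w j)
      = fun w => w (Sum.elim (fun _ => (Sum.inr 0 : Fin 1 ⊕ Fin 1)) (fun _ => Sum.inl 0) j) := by
    intro j
    funext w
    rw [grad_f_apply' w f hf]
    cases j with
    | inl j => cases (Fin.fin_one_eq_zero j); rfl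
    | inr j => cases (Fin.fin_one_eq_zero j); rfl
  show gradient (fun w => gradient f w j) z i = _
  rw [key j, (grad_coord' _ z).gradient]
  cases i with
  | inl i => cases (Fin.fin_one_eq_zero i); cases j with
    | inl j => cases (Fin.fin_one_eq_zero j); simp [EuclideanSpace.single_apply]
    | inr j => cases (Fin.fin_one_eq_zero j); simp [EuclideanSpace.single_apply]
  | inr i => cases (Fin.fin_one_eq_zero i); cases j with
    | inl j => cases (Fin.fin_one_eq_zero j); simp [EuclideanSpace.single_apply]
    | inr j => cases (Fin.fin_one_eq_zero j); simp [EuclideanSpace.single_apply]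

private lemma jgda_eq' (η τ : ℝ) (f : Spc 1 1 → ℝ)
    (hf : f = fun z => z (Sum.inl 0) * z (Sum.inr 0)) (i j : Fin 1 ⊕ Fin 1) :
    Jgda f η τ 0 i j = Sum.elim
      (fun _ => Sum.elim (fun _ => (1:ℝ)) (fun _ => -η/τ) j)
      (fun _ => Sum.elim (fun _ => η) (fun _ => 1) j) i := by
  rw [Jgda, Matrix.add_apply, Matrix.smul_apply, Hmat, Lam,
    Matrix.diagonal_mul, Matrix.diagonal_mul, hess_eq' 0 f hf]
  cases i with
  | inl i => cases (Fin.fin_one_eq_zero i); cases j with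
    | inl j => cases (Fin.fin_one_eq_zero j); simp [Matrix.one_apply]
    | inr j => cases (Fin.fin_one_eq_zero j); simp [Matrix.one_apply]; ring
  | inr i => cases (Fin.fin_one_eq_zero i); cases j with
    | inl j => cases (Fin.fin_one_eq_zero j); simp [Matrix.one_apply]
    | inr j => cases (Fin.fin_one_eq_zero j); simp [Matrix.one_apply]

private lemma det2' (A : Matrix (Fin 1 ⊕ Fin 1) (Fin 1 ⊕ Fin 1) ℂ) :
    A.det = A (Sum.inl 0) (Sum.inl 0) * A (Sum.inr 0) (Sum.inr 0)
      - A (Sum.inl 0) (Sum.inr 0) * A (Sum.inr 0) (Sum.inl 0) := by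
  rw [← Matrix.det_reindex_self finSumFinEquiv A, Matrix.det_fin_two]
  rfl

private lemma spec_eq' (η τ : ℝ) (hτ : 0 < τ)
    (f : Spc 1 1 → ℝ) (hf : f = fun z => z (Sum.inl 0) * z (Sum.inr 0)) :
    cSpec (Jgda f η τ 0) =
      {1 + ((η / Real.sqrt τ : ℝ) : ℂ) * Complex.I,
       1 - ((η / Real.sqrt τ : ℝ) : ℂ) * Complex.I} := by
  set c : ℝ := η / Real.sqrt τ with hc
  have hc2 : (c:ℂ)^2 = ((η^2/τ : ℝ) : ℂ) := by
    rw [← Complex.ofReal_pow, hc, div_pow, Real.sq_sqrt hτ.le]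
  ext μ
  rw [cSpec, spectrum.mem_iff]
  have hdet : (algebraMap ℂ (Matrix (Fin 1 ⊕ Fin 1) (Fin 1 ⊕ Fin 1) ℂ) μ
        - (Jgda f η τ 0).map (algebraMap ℝ ℂ)).det
      = (μ - (1 + (c:ℂ) * Complex.I)) * (μ - (1 - (c:ℂ) * Complex.I)) := by
    rw [det2']
    simp only [Matrix.sub_apply, Matrix.map_apply, jgda_eq' η τ f hf,
      Matrix.algebraMap_matrix_apply, Algebra.algebraMap_self, RingHom.id_apply,
      Complex.coe_algebraMap]
    have hτ' : (τ:ℂ) ≠ 0 := by exact_mod_cast hτ.ne'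
    have h2 : ((η^2/τ : ℝ) : ℂ) = (η:ℂ)^2 / τ := by push_cast; ring
    rw [h2] at hc2
    simp only [if_pos rfl, reduceCtorEq, if_false, Sum.elim_inl, Sum.elim_inr]
    push_cast
    linear_combination (c:ℂ)^2 * Complex.I_sq - hc2
  rw [Matrix.isUnit_iff_isUnit_det, isUnit_iff_ne_zero, not_ne_iff, hdet, mul_eq_zero,
    sub_eq_zero, sub_eq_zero]
  simp [Set.mem_insert_iff]

end Aux

/-- for f(x,y) = xy, the τ-GDA Jacobian at (0,0) has complex eigenvalues
1 ± (η/√τ)·i, so its spectral radius is √(1 + η²/τ) > 1; hence (0,0) is an unstable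
equilibrium of τ-GDA for every η, τ > 0. -/
theorem stmt14 (η τ : ℝ) (hη : 0 < η) (hτ : 0 < τ)
    (f : Spc 1 1 → ℝ) (hf : f = fun z => z (Sum.inl 0) * z (Sum.inr 0)) :
    cSpec (Jgda f η τ 0) =
      {1 + ((η / Real.sqrt τ : ℝ) : ℂ) * Complex.I,
       1 - ((η / Real.sqrt τ : ℝ) : ℂ) * Complex.I} ∧
    (∀ κ ∈ cSpec (Jgda f η τ 0), ‖κ‖ = Real.sqrt (1 + η ^ 2 / τ)) ∧
    1 < Real.sqrt (1 + η ^ 2 / τ) ∧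
    ∃ κ ∈ cSpec (Jgda f η τ 0), 1 < ‖κ‖ := by
  
  have hcc : (η / Real.sqrt τ) ^ 2 = η ^ 2 / τ := by
    rw [div_pow, Real.sq_sqrt hτ.le]
  have hspec := spec_eq' η τ hτ f hf
  have habs : ∀ κ ∈ cSpec (Jgda f η τ 0),
      ‖κ‖ = Real.sqrt (1 + η ^ 2 / τ) := by
    intro κ hκ
    rw [hspec] at hκ
    rcases hκ with h | h <;>
    · rw [h]
      rw [Complex.norm_def, Complex.normSq_apply]
      simp
      rw [← hcc]
      congr 1
      ring
  have hgt : 1 < Real.sqrt (1 + η ^ 2 / τ) := by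
    rw [show (1:ℝ) = Real.sqrt 1 by simp]
    apply Real.sqrt_lt_sqrt (by norm_num)
    have : 0 < η ^ 2 / τ := by positivity
    simp only [Real.sqrt_one]
    linarith
  refine ⟨hspec, habs, hgt, ⟨1 + ((η / Real.sqrt τ : ℝ) : ℂ) * Complex.I, ?_, ?_⟩⟩
  · rw [hspec]; exact Set.mem_insert _ _
  · rw [habs _ (by rw [hspec]; exact Set.mem_insert _ _)]
    exact hgt
end
end
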